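/- arXiv:2002.06181 — 8 statements merged into one kernel-verified Lean document; each statement's English description precedes it below -/
import Mathlib

section
/- For any pure state |Ψ⟩ in a finite-dimensional complex Hilbert space and any finite set S of unit vectors (the 'free' states), the minimum of ‖c‖₁² over all decompositions |Ψ⟩ = Σⱼ cⱼ|φⱼ⟩ with |φⱼ⟩ ∈ S equals the maximum of |⟨ω|Ψ⟩|² over all vectors |ω⟩ satisfying |⟨ω|φ⟩| ≤ 1 for all |φ⟩ ∈ S (strong duality for the extent), provided S spans the space. -/
/-!
Weak duality is the triangle inequality: `|⟨ω|Σ cⱼ φⱼ⟩| ≤ Σ |cⱼ| |⟨ω|φⱼ⟩| ≤ ‖c‖₁`.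
For the converse, if every decomposition of `Ψ` costs more than `t > 0`, then `Ψ` lies outside
the compact convex set `K = {Σ cᵢ φᵢ : ‖c‖₁ ≤ t}`, so Hahn–Banach gives a complex functional,
represented by some `ω₀` via Riesz, with `Re ⟨ω₀|x⟩ < u < Re ⟨ω₀|Ψ⟩` for `x ∈ K`. As `K` is
balanced, this bounds `t |⟨ω₀|φ⟩|` by `u` for every `φ ∈ S`, and `ω = (t/u) ω₀` is a witness with
`|⟨ω|Ψ⟩| > t`.
-/

open scoped InnerProductSpace ComplexConjugate

lemma RCLike.exists_norm_le_one_re_mul_eq_norm {𝕜 : Type*} [RCLike 𝕜] (w : 𝕜) :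
    ∃ ζ : 𝕜, ‖ζ‖ ≤ 1 ∧ RCLike.re (ζ * w) = ‖w‖ := by
  refine ⟨conj w / ‖w‖, ?_, ?_⟩
  · rw [norm_div, RCLike.norm_conj, RCLike.norm_ofReal, abs_norm]
    exact div_self_le_one _
  · rw [div_mul_eq_mul_div, RCLike.conj_mul, ← RCLike.ofReal_pow, ← RCLike.ofReal_div,
      RCLike.ofReal_re, sq, mul_self_div_self]

section L1Ball

variable {ι E : Type*} [Fintype ι] [NormedAddCommGroup E] [InnerProductSpace ℂ E]

lemma norm_inner_sum_smul_le {ω : E} {φ : ι → E} (hω : ∀ i, ‖⟪ω, φ i⟫_ℂ‖ ≤ 1) (c : ι → ℂ) :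
    ‖⟪ω, ∑ i, c i • φ i⟫_ℂ‖ ≤ ∑ i, ‖c i‖ := by
  rw [inner_sum]
  refine (norm_sum_le _ _).trans (Finset.sum_le_sum fun i _ => ?_)
  rw [inner_smul_right, norm_mul]
  exact mul_le_of_le_one_right (norm_nonneg _) (hω i)

def l1CombinationBall (φ : ι → E) (t : ℝ) : Set E :=
  (fun c : PiLp 1 (fun _ : ι => ℂ) => ∑ i, c i • φ i) '' Metric.closedBall 0 t

variable (φ : ι → E) (t : ℝ)

lemma isCompact_l1CombinationBall : IsCompact (l1CombinationBall φ t) :=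
  (isCompact_closedBall _ _).image (by fun_prop)

lemma convex_l1CombinationBall : Convex ℝ (l1CombinationBall φ t) :=
  (convex_closedBall 0 t).is_linear_image
    ⟨fun c c' => by simp [add_smul, Finset.sum_add_distrib],
     fun r c => by simp [Finset.smul_sum, mul_smul]⟩

lemma smul_mem_l1CombinationBall [DecidableEq ι] {z : ℂ} (hz : ‖z‖ ≤ t) (i : ι) :
    z • φ i ∈ l1CombinationBall φ t :=
  ⟨PiLp.single 1 i z, by simpa using hz, by simp⟩

lemma zero_mem_l1CombinationBall (ht : 0 ≤ t) : (0 : E) ∈ l1CombinationBall φ t :=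
  ⟨0, Metric.mem_closedBall_self ht, by simp⟩

variable [CompleteSpace E]

theorem exists_witness_of_forall_lt_l1Norm {Ψ : E} (ht : 0 < t)
    (hΨ : ∀ c : ι → ℂ, ∑ i, c i • φ i = Ψ → t < ∑ i, ‖c i‖) :
    ∃ ω : E, (∀ i, ‖⟪ω, φ i⟫_ℂ‖ ≤ 1) ∧ t < ‖⟪ω, Ψ⟫_ℂ‖ := by
  classical
  have hΨK : Ψ ∉ l1CombinationBall φ t := by
    rintro ⟨c, hc, rfl⟩
    rw [mem_closedBall_zero_iff, PiLp.norm_eq_of_L1] at hc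
    exact (hΨ c rfl).not_ge hc
  obtain ⟨f, u, hfK, hfΨ⟩ := RCLike.geometric_hahn_banach_closed_point (𝕜 := ℂ)
    (convex_l1CombinationBall φ t) (isCompact_l1CombinationBall φ t).isClosed hΨK
  have hu : 0 < u := by simpa using hfK 0 (zero_mem_l1CombinationBall φ t ht.le)
  have hfφ : ∀ i, t * ‖f (φ i)‖ < u := by
    intro i
    obtain ⟨ζ, hζ, hre⟩ := RCLike.exists_norm_le_one_re_mul_eq_norm (f (φ i))
    have htζ : ‖(t : ℂ) * ζ‖ ≤ t := by
      rw [norm_mul, Complex.norm_of_nonneg ht.le]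
      exact mul_le_of_le_one_right ht.le hζ
    have := hfK _ (smul_mem_l1CombinationBall φ t htζ i)
    rwa [map_smul, smul_eq_mul, mul_assoc, RCLike.re_to_complex, Complex.re_ofReal_mul,
      ← RCLike.re_to_complex, hre] at this
  refine ⟨(InnerProductSpace.toDual ℂ E).symm ((t / u) • f), fun i => ?_, ?_⟩
  · rw [InnerProductSpace.toDual_symm_apply, smul_apply, norm_smul,
      Real.norm_of_nonneg (by positivity), div_mul_eq_mul_div, div_le_one hu]
    exact (hfφ i).le
  · rw [InnerProductSpace.toDual_symm_apply, smul_apply, norm_smul,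
      Real.norm_of_nonneg (by positivity), div_mul_eq_mul_div, lt_div_iff₀ hu]
    exact mul_lt_mul_of_pos_left (hfΨ.trans_le (Complex.re_le_norm _)) ht

end L1Ball

section Extent

variable {E : Type*} [NormedAddCommGroup E] [InnerProductSpace ℂ E]

def decompositionCosts (S : Finset E) (Ψ : E) : Set ℝ :=
  {r | ∃ (m : ℕ) (c : Fin m → ℂ) (φ : Fin m → E),
    (∀ j, φ j ∈ S) ∧ Ψ = ∑ j, c j • φ j ∧ r = (∑ j, ‖c j‖) ^ 2}

def witnessValues (S : Finset E) (Ψ : E) : Set ℝ :=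
  {r | ∃ ω : E, (∀ φ ∈ S, ‖⟪ω, φ⟫_ℂ‖ ≤ 1) ∧ r = ‖⟪ω, Ψ⟫_ℂ‖ ^ 2}

variable {S : Finset E} {Ψ : E}

lemma decompositionCosts_nonempty (hΨ : Ψ ∈ Submodule.span ℂ (S : Set E)) :
    (decompositionCosts S Ψ).Nonempty := by
  obtain ⟨m, c, φ, hc⟩ := Submodule.mem_span_set'.mp hΨ
  exact ⟨_, m, c, fun j => φ j, fun j => (φ j).2, hc.symm, rfl⟩

lemma bddBelow_decompositionCosts : BddBelow (decompositionCosts S Ψ) :=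
  ⟨0, by rintro _ ⟨m, c, φ, -, -, rfl⟩; positivity⟩

lemma zero_mem_witnessValues : (0 : ℝ) ∈ witnessValues S Ψ :=
  ⟨0, fun φ _ => by simp, by simp⟩

lemma le_of_mem_witnessValues_of_mem_decompositionCosts {a b : ℝ}
    (hb : b ∈ witnessValues S Ψ) (ha : a ∈ decompositionCosts S Ψ) : b ≤ a := by
  obtain ⟨ω, hω, rfl⟩ := hb
  obtain ⟨m, c, φ, hφ, rfl, rfl⟩ := ha
  gcongr
  exact norm_inner_sum_smul_le (fun j => hω _ (hφ j)) c

lemma exists_mem_witnessValues_gt [CompleteSpace E] {r : ℝ}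
    (hr : r < sInf (decompositionCosts S Ψ)) : ∃ b ∈ witnessValues S Ψ, r < b := by
  rcases lt_or_ge r 0 with hr0 | hr0
  · exact ⟨0, zero_mem_witnessValues, hr0⟩
  obtain ⟨s, hrs, hs⟩ := exists_between hr
  have hs0 : 0 ≤ s := hr0.trans hrs.le
  let φ : Fin S.card → E := fun j => S.equivFin.symm j
  have hcost : ∀ c : Fin S.card → ℂ, ∑ j, c j • φ j = Ψ → √s < ∑ j, ‖c j‖ := by
    intro c hc
    refine lt_of_pow_lt_pow_left₀ 2 (by positivity) ?_
    rw [Real.sq_sqrt hs0]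
    exact hs.trans_le <| csInf_le bddBelow_decompositionCosts
      ⟨_, c, φ, fun j => (S.equivFin.symm j).2, hc.symm, rfl⟩
  obtain ⟨ω, hωφ, hωΨ⟩ :=
    exists_witness_of_forall_lt_l1Norm φ (√s) (Real.sqrt_pos.2 (hr0.trans_lt hrs)) hcost
  refine ⟨_, ⟨ω, fun x hx => by simpa [φ] using hωφ (S.equivFin ⟨x, hx⟩), rfl⟩, ?_⟩
  calc r < s := hrs
    _ = √s ^ 2 := (Real.sq_sqrt hs0).symm
    _ < ‖⟪ω, Ψ⟫_ℂ‖ ^ 2 := by gcongr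

end Extent

theorem extent_strong_duality_general {d : ℕ}
    (S : Finset (EuclideanSpace ℂ (Fin d)))
    (hspan : Submodule.span ℂ (S : Set (EuclideanSpace ℂ (Fin d))) = ⊤)
    (Ψ : EuclideanSpace ℂ (Fin d)) :
    sInf {r : ℝ | ∃ (m : ℕ) (c : Fin m → ℂ) (φ : Fin m → EuclideanSpace ℂ (Fin d)),
        (∀ j, φ j ∈ S) ∧ Ψ = ∑ j, c j • φ j ∧ r = (∑ j, ‖c j‖) ^ 2} =
    sSup {r : ℝ | ∃ ω : EuclideanSpace ℂ (Fin d),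
        (∀ φ ∈ S, ‖⟪ω, φ⟫_ℂ‖ ≤ 1) ∧ r = ‖⟪ω, Ψ⟫_ℂ‖ ^ 2} := by
  show sInf (decompositionCosts S Ψ) = sSup (witnessValues S Ψ)
  have hA := decompositionCosts_nonempty (hspan ▸ Submodule.mem_top : Ψ ∈ _)
  refine (csSup_eq_of_forall_le_of_forall_lt_exists_gt ⟨0, zero_mem_witnessValues⟩ ?_ ?_).symm
  · exact fun b hb => le_csInf hA fun a ha =>
      le_of_mem_witnessValues_of_mem_decompositionCosts hb ha
  · exact fun r hr => exists_mem_witnessValues_gt hr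

/-- **Strong duality for the pure-state extent.**  For any pure state `Ψ` in a
finite-dimensional complex Hilbert space and any finite spanning set `S` of unit
vectors (the free states), the minimum of `‖c‖₁²` over free decompositions of `Ψ`
equals the maximum of `|⟨ω|Ψ⟩|²` over all `ω`-witnesses. -/
theorem extent_strong_duality {d : ℕ}
    (S : Finset (EuclideanSpace ℂ (Fin d)))
    (hunit : ∀ φ ∈ S, ‖φ‖ = 1)
    (hspan : Submodule.span ℂ (S : Set (EuclideanSpace ℂ (Fin d))) = ⊤)
    (Ψ : EuclideanSpace ℂ (Fin d)) :
    sInf {r : ℝ | ∃ (m : ℕ) (c : Fin m → ℂ) (φ : Fin m → EuclideanSpace ℂ (Fin d)),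
        (∀ j, φ j ∈ S) ∧ Ψ = ∑ j, c j • φ j ∧ r = (∑ j, ‖c j‖) ^ 2} =
    sSup {r : ℝ | ∃ ω : EuclideanSpace ℂ (Fin d),
        (∀ φ ∈ S, ‖⟪ω, φ⟫_ℂ‖ ≤ 1) ∧ r = ‖⟪ω, Ψ⟫_ℂ‖ ^ 2} :=
  extent_strong_duality_general S hspan Ψ
end

section
/- For any pure state Ψ, the dyadic negativity of the projector |Ψ⟩⟨Ψ| equals the extent ξ(Ψ): min { ‖α‖₁ : |Ψ⟩⟨Ψ| = Σⱼ αⱼ |Lⱼ⟩⟨Rⱼ|, Lⱼ, Rⱼ ∈ S } = min { ‖c‖₁² : |Ψ⟩ = Σⱼ cⱼ|φⱼ⟩, φⱼ ∈ S }. -/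
open Matrix

noncomputable section

/-- The dyad `|L⟩⟨R|` as a matrix. -/
def dyadM {d : ℕ} (L R : Fin d → ℂ) : Matrix (Fin d) (Fin d) ℂ :=
  Matrix.vecMulVec L (star R)

namespace DyadNegAux

variable {d : ℕ}

/-- The set of ℓ¹-weights of decompositions of `x` over `S`. -/
def Dset (S : Finset (Fin d → ℂ)) (x : Fin d → ℂ) : Set ℝ :=
  {r | ∃ (m : ℕ) (c : Fin m → ℂ) (φ : Fin m → (Fin d → ℂ)),
    (∀ j, φ j ∈ S) ∧ x = ∑ j, c j • φ j ∧ r = ∑ j, ‖c j‖}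

/-- The atomic norm associated to `S`. -/
def nu (S : Finset (Fin d → ℂ)) (x : Fin d → ℂ) : ℝ := sInf (Dset S x)

lemma Dset_nonneg {S : Finset (Fin d → ℂ)} {x : Fin d → ℂ} {r : ℝ} (h : r ∈ Dset S x) : 0 ≤ r := by
  obtain ⟨m, c, φ, -, -, rfl⟩ := h
  exact Finset.sum_nonneg fun j _ => norm_nonneg _

lemma Dset_bddBelow (S : Finset (Fin d → ℂ)) (x : Fin d → ℂ) : BddBelow (Dset S x) :=
  ⟨0, fun _ h => Dset_nonneg h⟩

lemma Dset_nonempty (S : Finset (Fin d → ℂ))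
    (hspan : Submodule.span ℂ (S : Set (Fin d → ℂ)) = ⊤) (x : Fin d → ℂ) :
    (Dset S x).Nonempty := by
  have hx : x ∈ Submodule.span ℂ (S : Set (Fin d → ℂ)) := by rw [hspan]; trivial
  obtain ⟨f, -, hf⟩ := Submodule.mem_span_finset.mp hx
  refine ⟨∑ j : Fin S.card, ‖f (S.equivFin.symm j : Fin d → ℂ)‖,
    S.card, fun j => f (S.equivFin.symm j : Fin d → ℂ), fun j => (S.equivFin.symm j : Fin d → ℂ),
    fun j => (S.equivFin.symm j).2, ?_, rfl⟩
  rw [← hf, ← Finset.sum_coe_sort S (fun i => f i • i)]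
  exact (Equiv.sum_comp S.equivFin.symm fun a : S => f (a : Fin d → ℂ) • (a : Fin d → ℂ)).symm

lemma nu_nonneg (S : Finset (Fin d → ℂ)) (x : Fin d → ℂ) : 0 ≤ nu S x :=
  Real.sInf_nonneg fun _ h => Dset_nonneg h

lemma nu_le {S : Finset (Fin d → ℂ)} {x : Fin d → ℂ} {r : ℝ} (h : r ∈ Dset S x) : nu S x ≤ r :=
  csInf_le (Dset_bddBelow S x) h

variable {S : Finset (Fin d → ℂ)}

lemma exists_near (hspan : Submodule.span ℂ (S : Set (Fin d → ℂ)) = ⊤)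
    (x : Fin d → ℂ) {ε : ℝ} (hε : 0 < ε) :
    ∃ r ∈ Dset S x, r < nu S x + ε :=
  Real.lt_sInf_add_pos (Dset_nonempty S hspan x) hε

lemma add_mem_Dset {x y : Fin d → ℂ} {r s : ℝ} (hx : r ∈ Dset S x) (hy : s ∈ Dset S y) :
    r + s ∈ Dset S (x + y) := by
  obtain ⟨m, c, φ, hφ, hxe, rfl⟩ := hx
  obtain ⟨n, c', φ', hφ', hye, rfl⟩ := hy
  refine ⟨m + n, Fin.append c c', Fin.append φ φ', ?_, ?_, ?_⟩
  · intro j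
    refine Fin.addCases (fun i => ?_) (fun i => ?_) j
    · rw [Fin.append_left]; exact hφ i
    · rw [Fin.append_right]; exact hφ' i
  · rw [Fin.sum_univ_add (f := fun i => Fin.append c c' i • Fin.append φ φ' i)]
    simp only [Fin.append_left, Fin.append_right]
    rw [← hxe, ← hye]
  · rw [Fin.sum_univ_add (f := fun i => ‖Fin.append c c' i‖)]
    simp only [Fin.append_left, Fin.append_right]

lemma smul_mem_Dset (a : ℂ) {x : Fin d → ℂ} {r : ℝ} (hx : r ∈ Dset S x) :
    ‖a‖ * r ∈ Dset S (a • x) := by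
  obtain ⟨m, c, φ, hφ, hxe, rfl⟩ := hx
  refine ⟨m, fun j => a * c j, φ, hφ, ?_, ?_⟩
  · rw [hxe, Finset.smul_sum]
    simp [smul_smul]
  · rw [Finset.mul_sum]
    simp [norm_mul]

lemma nu_add_le (hspan : Submodule.span ℂ (S : Set (Fin d → ℂ)) = ⊤)
    (x y : Fin d → ℂ) : nu S (x + y) ≤ nu S x + nu S y := by
  refine le_of_forall_pos_le_add fun ε hε => ?_
  obtain ⟨r, hr, hr'⟩ := exists_near hspan x (half_pos hε)
  obtain ⟨s, hs, hs'⟩ := exists_near hspan y (half_pos hε)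
  have := nu_le (add_mem_Dset hr hs)
  linarith

lemma nu_smul_le (hspan : Submodule.span ℂ (S : Set (Fin d → ℂ)) = ⊤) (a : ℂ)
    (x : Fin d → ℂ) : nu S (a • x) ≤ ‖a‖ * nu S x := by
  refine le_of_forall_pos_le_add fun ε hε => ?_
  have hb : (0:ℝ) < ‖a‖ + 1 := by positivity
  obtain ⟨r, hr, hr'⟩ := exists_near hspan x (div_pos hε hb)
  have h1 := nu_le (smul_mem_Dset a hr)
  have h2 : ‖a‖ * r ≤ ‖a‖ * (nu S x + ε / (‖a‖ + 1)) :=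
    mul_le_mul_of_nonneg_left hr'.le (norm_nonneg _)
  have h3 : ‖a‖ * (ε / (‖a‖ + 1)) ≤ ε := by
    rw [mul_div_assoc']
    rw [div_le_iff₀ hb]
    nlinarith [norm_nonneg a, hε.le]
  nlinarith [norm_nonneg a]

lemma nu_neg (hspan : Submodule.span ℂ (S : Set (Fin d → ℂ)) = ⊤)
    (x : Fin d → ℂ) : nu S (-x) = nu S x := by
  have h1 := nu_smul_le hspan (-1) x
  have h2 := nu_smul_le hspan (-1) (-x)
  simp at h1 h2
  exact le_antisymm h1 h2

lemma nu_zero : nu S (0 : Fin d → ℂ) = 0 := by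
  refine le_antisymm (nu_le ⟨0, Fin.elim0, Fin.elim0, fun j => j.elim0, by simp, by simp⟩)
    (nu_nonneg S 0)

lemma abs_entry_le_one {φ : Fin d → ℂ} (h : star φ ⬝ᵥ φ = 1) (i : Fin d) :
    ‖φ i‖ ≤ 1 := by
  have h1 : (1 : ℂ) = ∑ k, (Complex.normSq (φ k) : ℂ) := by
    rw [← h]
    simp [dotProduct, Pi.star_apply, Complex.star_def, Complex.normSq_eq_conj_mul_self]
  have h2 : (1 : ℝ) = ∑ k, Complex.normSq (φ k) := by
    have := congrArg Complex.re h1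
    simpa using this
  have h3 : Complex.normSq (φ i) ≤ 1 := by
    rw [h2]
    exact Finset.single_le_sum (f := fun k => Complex.normSq (φ k))
      (fun k _ => Complex.normSq_nonneg _) (Finset.mem_univ i)
  have h4 := Complex.sq_norm (φ i)
  nlinarith [norm_nonneg (φ i)]

lemma abs_le_of_mem_Dset (hunit : ∀ φ ∈ S, star φ ⬝ᵥ φ = 1) {x : Fin d → ℂ} {r : ℝ}
    (h : r ∈ Dset S x) (i : Fin d) : ‖x i‖ ≤ r := by
  obtain ⟨m, c, φ, hφ, rfl, rfl⟩ := h
  calc ‖(∑ j, c j • φ j) i‖ = ‖∑ j, c j * φ j i‖ := by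
        simp [Finset.sum_apply]
    _ ≤ ∑ j, ‖c j * φ j i‖ := norm_sum_le _ _
    _ ≤ ∑ j, ‖c j‖ := by
        refine Finset.sum_le_sum fun j _ => ?_
        rw [norm_mul]
        calc ‖c j‖ * ‖φ j i‖
            ≤ ‖c j‖ * 1 := by
              exact mul_le_mul_of_nonneg_left (abs_entry_le_one (hunit _ (hφ j)) i)
                (norm_nonneg _)
          _ = ‖c j‖ := mul_one _

lemma eq_zero_of_nu_eq_zero (hunit : ∀ φ ∈ S, star φ ⬝ᵥ φ = 1)
    (hspan : Submodule.span ℂ (S : Set (Fin d → ℂ)) = ⊤)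
    {x : Fin d → ℂ} (h : nu S x = 0) : x = 0 := by
  funext i
  have hle : ‖x i‖ ≤ nu S x :=
    le_csInf (Dset_nonempty S hspan x) fun r hr => abs_le_of_mem_Dset hunit hr i
  rw [h] at hle
  have h0 := norm_nonneg (x i)
  have : ‖x i‖ = 0 := le_antisymm hle h0
  simpa using this

lemma nu_le_one {φ : Fin d → ℂ} (hφ : φ ∈ S) : nu S φ ≤ 1 := by
  have : (1 : ℝ) ∈ Dset S φ :=
    ⟨1, fun _ => 1, fun _ => φ, fun _ => hφ, by simp, by simp⟩
  exact nu_le this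

/-- Type synonym carrying the atomic norm. -/
def V (d : ℕ) : Type := Fin d → ℂ

instance : AddCommGroup (V d) := inferInstanceAs (AddCommGroup (Fin d → ℂ))
instance : Module ℂ (V d) := inferInstanceAs (Module ℂ (Fin d → ℂ))

/-- Hahn–Banach dual witness for the atomic norm. -/
lemma exists_dual (S : Finset (Fin d → ℂ))
    (hunit : ∀ φ ∈ S, star φ ⬝ᵥ φ = 1)
    (hspan : Submodule.span ℂ (S : Set (Fin d → ℂ)) = ⊤)
    (Ψ : Fin d → ℂ) (hΨ : Ψ ≠ 0) :
    ∃ g : (Fin d → ℂ) →ₗ[ℂ] ℂ,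
      (∀ x, ‖g x‖ ≤ nu S x) ∧ g Ψ = (nu S Ψ : ℂ) := by
  letI N : NormedAddCommGroup (V d) := AddGroupNorm.toNormedAddCommGroup
    { toFun := fun x => nu S (x : Fin d → ℂ)
      map_zero' := nu_zero
      add_le' := nu_add_le hspan
      neg' := nu_neg hspan
      eq_zero_of_map_eq_zero' := fun x h => eq_zero_of_nu_eq_zero hunit hspan h }
  letI : NormedSpace ℂ (V d) :=
    { (inferInstance : Module ℂ (V d)) with
      norm_smul_le := fun a x => by exact nu_smul_le hspan a x }
  have hΨ' : (show V d from Ψ) ≠ 0 := hΨ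
  obtain ⟨g, hg1, hg2⟩ := exists_dual_vector (E := V d) ℂ (show V d from Ψ) (norm_ne_zero_iff.mpr hΨ')
  have habs : ∀ x : V d, ‖g x‖ ≤ nu S (x : Fin d → ℂ) := by
    intro x
    have := g.le_opNorm x
    rw [hg1, one_mul] at this
    exact this
  refine ⟨⟨⟨fun x => g (x : V d), fun x y => g.map_add x y, ⟩, fun a x => g.map_smul a x⟩,
    fun x => habs x, ?_⟩
  · exact hg2

lemma dyad_expand {m : ℕ} (c : Fin m → ℂ) (φ : Fin m → (Fin d → ℂ)) (Ψ : Fin d → ℂ)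
    (hx : Ψ = ∑ j, c j • φ j) :
    dyadM Ψ Ψ = ∑ p : Fin m × Fin m,
      (c p.1 * star (c p.2)) • dyadM (φ p.1) (φ p.2) := by
  subst hx
  ext i k
  simp only [dyadM, vecMulVec_apply, Matrix.sum_apply, Matrix.smul_apply, smul_eq_mul,
    Finset.sum_apply, Pi.star_apply, Pi.smul_apply, star_sum, star_smul]
  rw [Finset.sum_mul_sum]
  rw [← Finset.sum_product']
  rw [Finset.univ_product_univ]
  refine Finset.sum_congr rfl fun p _ => ?_
  ring

/-- conjugate-sandwich linear map `x ↦ star (g (star x))`. -/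
def Gmap (g : (Fin d → ℂ) →ₗ[ℂ] ℂ) : (Fin d → ℂ) →ₗ[ℂ] ℂ where
  toFun x := star (g (star x))
  map_add' x y := by simp [star_add]
  map_smul' a x := by simp [star_smul, smul_eq_mul, mul_comm]

lemma Gmap_row (g : (Fin d → ℂ) →ₗ[ℂ] ℂ) (u v : Fin d → ℂ) (i : Fin d) :
    Gmap g (dyadM u v i) = u i * star (g v) := by
  have : dyadM u v i = u i • star v := by
    funext k; simp [dyadM, vecMulVec_apply, Pi.smul_apply, smul_eq_mul]
  rw [this, _root_.map_smul, smul_eq_mul]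
  simp [Gmap]

lemma sandwich {m : ℕ} (g : (Fin d → ℂ) →ₗ[ℂ] ℂ) (α : Fin m → ℂ)
    (L R : Fin m → (Fin d → ℂ)) (Ψ : Fin d → ℂ)
    (hM : dyadM Ψ Ψ = ∑ j, α j • dyadM (L j) (R j)) :
    star (g Ψ) * g Ψ = ∑ j, α j * (star (g (R j)) * g (L j)) := by
  have hrow : ∀ i, dyadM Ψ Ψ i = ∑ j, α j • (dyadM (L j) (R j) i) := by
    intro i; rw [hM]; funext k
    simp [Matrix.sum_apply, Matrix.smul_apply, Finset.sum_apply, Pi.smul_apply]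
  have hvec : (fun i => Gmap g (dyadM Ψ Ψ i)) =
      ∑ j, (α j * star (g (R j))) • L j := by
    funext i
    rw [hrow i, map_sum]
    rw [Finset.sum_apply]
    refine Finset.sum_congr rfl fun j _ => ?_
    rw [_root_.map_smul, smul_eq_mul, Gmap_row]
    simp [Pi.smul_apply, smul_eq_mul]
    ring
  have hvec2 : (fun i => Gmap g (dyadM Ψ Ψ i)) = star (g Ψ) • Ψ := by
    funext i
    rw [Gmap_row]
    simp [Pi.smul_apply, smul_eq_mul]
    ring
  have := congrArg g (hvec2.symm.trans hvec)
  rw [_root_.map_smul, smul_eq_mul, map_sum] at this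
  rw [this]
  refine Finset.sum_congr rfl fun j _ => ?_
  rw [_root_.map_smul, smul_eq_mul]
  ring

end DyadNegAux

open DyadNegAux in
/-- **Dyadic negativity of a pure state equals its extent**: for a unit vector `Ψ`
and a finite spanning set `S` of free unit vectors,
`Λ(|Ψ⟩⟨Ψ|) = min{‖α‖₁ : |Ψ⟩⟨Ψ| = Σⱼ αⱼ|Lⱼ⟩⟨Rⱼ|}` equals
`ξ(Ψ) = min{‖c‖₁² : Ψ = Σⱼ cⱼ φⱼ}`. -/
theorem dyadicNegativity_pure_eq_extent {d : ℕ}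
    (S : Finset (Fin d → ℂ))
    (hunit : ∀ φ ∈ S, star φ ⬝ᵥ φ = 1)
    (hspan : Submodule.span ℂ (S : Set (Fin d → ℂ)) = ⊤)
    (Ψ : Fin d → ℂ) (hΨ : star Ψ ⬝ᵥ Ψ = 1) :
    sInf {r : ℝ | ∃ (m : ℕ) (α : Fin m → ℂ) (L R : Fin m → (Fin d → ℂ)),
        (∀ j, L j ∈ S) ∧ (∀ j, R j ∈ S) ∧
        dyadM Ψ Ψ = ∑ j, α j • dyadM (L j) (R j) ∧ r = ∑ j, ‖α j‖} =
    sInf {r : ℝ | ∃ (m : ℕ) (c : Fin m → ℂ) (φ : Fin m → (Fin d → ℂ)),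
        (∀ j, φ j ∈ S) ∧ Ψ = ∑ j, c j • φ j ∧ r = (∑ j, ‖c j‖) ^ 2} := by
  set A := {r : ℝ | ∃ (m : ℕ) (α : Fin m → ℂ) (L R : Fin m → (Fin d → ℂ)),
        (∀ j, L j ∈ S) ∧ (∀ j, R j ∈ S) ∧
        dyadM Ψ Ψ = ∑ j, α j • dyadM (L j) (R j) ∧ r = ∑ j, ‖α j‖} with hA
  set B := {r : ℝ | ∃ (m : ℕ) (c : Fin m → ℂ) (φ : Fin m → (Fin d → ℂ)),
        (∀ j, φ j ∈ S) ∧ Ψ = ∑ j, c j • φ j ∧ r = (∑ j, ‖c j‖) ^ 2} with hB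
  -- every extent decomposition induces a dyadic decomposition of the same weight
  have hBA : ∀ b ∈ B, b ∈ A := by
    rintro b ⟨m, c, φ, hφ, hx, rfl⟩
    refine ⟨m * m,
      fun j => c (finProdFinEquiv.symm j).1 * star (c (finProdFinEquiv.symm j).2),
      fun j => φ (finProdFinEquiv.symm j).1, fun j => φ (finProdFinEquiv.symm j).2,
      fun j => hφ _, fun j => hφ _, ?_, ?_⟩
    · rw [Equiv.sum_comp finProdFinEquiv.symm
        (fun p : Fin m × Fin m => (c p.1 * star (c p.2)) • dyadM (φ p.1) (φ p.2))]
      exact dyad_expand c φ Ψ hx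
    · rw [Equiv.sum_comp finProdFinEquiv.symm
        (fun p : Fin m × Fin m => ‖c p.1 * star (c p.2)‖)]
      rw [sq, Finset.sum_mul_sum, ← Finset.univ_product_univ, Finset.sum_product]
      refine Finset.sum_congr rfl fun p _ => Finset.sum_congr rfl fun q _ => ?_
      rw [norm_mul]
      congr 1
      rw [Complex.star_def, Complex.norm_conj]
  -- nonemptiness and boundedness
  have hDne : (Dset S Ψ).Nonempty := Dset_nonempty S hspan Ψ
  have hBne : B.Nonempty := by
    obtain ⟨s, m, c, φ, hφ, hx, rfl⟩ := hDne
    exact ⟨(∑ j, ‖c j‖) ^ 2, m, c, φ, hφ, hx, rfl⟩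
  have hAne : A.Nonempty := hBne.imp hBA
  have hAbdd : BddBelow A := by
    refine ⟨0, ?_⟩
    rintro r ⟨m, α, L, R, -, -, -, rfl⟩
    exact Finset.sum_nonneg fun j _ => norm_nonneg _
  -- `sInf B = (nu S Ψ)^2`
  have hmax : ∀ s : ℝ, 0 ≤ s → (fun t : ℝ => (max t 0) ^ 2) s = s ^ 2 := by
    intro s h
    simp [max_eq_left h]
  have hf : B = (fun t : ℝ => (max t 0) ^ 2) '' Dset S Ψ := by
    ext r
    constructor
    · rintro ⟨m, c, φ, hφ, hx, rfl⟩
      exact ⟨∑ j, ‖c j‖, ⟨m, c, φ, hφ, hx, rfl⟩,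
        hmax _ (Finset.sum_nonneg fun j _ => norm_nonneg _)⟩
    · rintro ⟨s, hs, rfl⟩
      obtain ⟨m, c, φ, hφ, hx, rfl⟩ := hs
      exact ⟨m, c, φ, hφ, hx,
        hmax _ (Finset.sum_nonneg fun j _ => norm_nonneg _)⟩
  have hmono : Monotone (fun t : ℝ => (max t 0) ^ 2) := fun a b hab =>
    pow_le_pow_left₀ (le_max_right _ _) (max_le_max hab le_rfl) 2
  have hcont : ContinuousAt (fun t : ℝ => (max t 0) ^ 2) (sInf (Dset S Ψ)) :=
    (((continuous_id.max continuous_const).pow 2)).continuousAt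
  have hsB : sInf B = (nu S Ψ) ^ 2 := by
    rw [hf, ← hmono.map_csInf_of_continuousAt hcont hDne (Dset_bddBelow S Ψ)]
    show (max (nu S Ψ) 0) ^ 2 = (nu S Ψ) ^ 2
    rw [max_eq_left (nu_nonneg S Ψ)]
  -- the two inequalities
  refine le_antisymm (le_csInf hBne fun b hb => csInf_le hAbdd (hBA b hb))
    (le_csInf hAne ?_)
  rintro r ⟨m, α, L, R, hL, hR, hM, rfl⟩
  rw [hsB]
  have hΨne : Ψ ≠ 0 := by
    intro h
    rw [h] at hΨ
    simp at hΨ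
  obtain ⟨g, hg, hgΨ⟩ := exists_dual S hunit hspan Ψ hΨne
  have hs := sandwich g α L R Ψ hM
  have key : (((nu S Ψ) ^ 2 : ℝ) : ℂ) = ∑ j, α j * (star (g (R j)) * g (L j)) := by
    rw [← hs, hgΨ, Complex.star_def, Complex.conj_ofReal]
    push_cast
    ring
  have habs1 : (nu S Ψ) ^ 2 = ‖(((nu S Ψ) ^ 2 : ℝ) : ℂ)‖ := by
    rw [Complex.norm_real, Real.norm_of_nonneg (by positivity)]
  rw [habs1, key]
  calc ‖∑ j, α j * (star (g (R j)) * g (L j))‖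
      ≤ ∑ j, ‖α j * (star (g (R j)) * g (L j))‖ := norm_sum_le _ _
    _ ≤ ∑ j, ‖α j‖ := by
        refine Finset.sum_le_sum fun j _ => ?_
        rw [norm_mul, norm_mul]
        have h1 : ‖star (g (R j))‖ ≤ 1 := by
          rw [Complex.star_def, Complex.norm_conj]
          exact le_trans (hg (R j)) (nu_le_one (hR j))
        have h2 : ‖g (L j)‖ ≤ 1 :=
          le_trans (hg (L j)) (nu_le_one (hL j))
        have h0 := norm_nonneg (α j)
        have h3 : ‖star (g (R j))‖ * ‖g (L j)‖ ≤ 1 :=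
          mul_le_one₀ h1 (norm_nonneg _) h2
        calc ‖α j‖ * (‖star (g (R j))‖ * ‖g (L j)‖)
            ≤ ‖α j‖ * 1 := mul_le_mul_of_nonneg_left h3 h0
          _ = ‖α j‖ := mul_one _
end
end

section
/- For any density matrix ρ, the generalized robustness, dyadic negativity and mixed-state extent satisfy the sandwich inequality Λ⁺(ρ) ≤ Λ(ρ) ≤ Ξ(ρ). -/
open Matrix
open scoped ComplexOrder

noncomputable section

/-- The pure-state extent `ξ(Ψ)` with respect to a free set `S`. -/
def extent {d : ℕ} (S : Set (Fin d → ℂ)) (Ψ : Fin d → ℂ) : ℝ :=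
  sInf {r : ℝ | ∃ (m : ℕ) (c : Fin m → ℂ) (φ : Fin m → (Fin d → ℂ)),
    (∀ j, φ j ∈ S) ∧ Ψ = ∑ j, c j • φ j ∧ r = (∑ j, ‖c j‖) ^ 2}

/-- The dyadic negativity `Λ(ρ)` with respect to a free set `S`. -/
def dyadicNeg {d : ℕ} (S : Set (Fin d → ℂ)) (ρ : Matrix (Fin d) (Fin d) ℂ) : ℝ :=
  sInf {r : ℝ | ∃ (m : ℕ) (α : Fin m → ℂ) (L R : Fin m → (Fin d → ℂ)),
    (∀ j, L j ∈ S) ∧ (∀ j, R j ∈ S) ∧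
    ρ = ∑ j, α j • dyadM (L j) (R j) ∧ r = ∑ j, ‖α j‖}

/-- The generalized robustness `Λ⁺(ρ)`: the maximum of `Tr[Wρ]` over positive
semidefinite witnesses `W` with `⟨φ|W|φ⟩ ≤ 1` for all free `φ`. -/
def genRob {d : ℕ} (S : Set (Fin d → ℂ)) (ρ : Matrix (Fin d) (Fin d) ℂ) : ℝ :=
  sSup {r : ℝ | ∃ W : Matrix (Fin d) (Fin d) ℂ, W.PosSemidef ∧
    (∀ φ ∈ S, (star φ ⬝ᵥ (W *ᵥ φ)).re ≤ 1) ∧ r = ((W * ρ).trace).re}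

/-- The mixed-state extent `Ξ(ρ)`: the convex-roof extension of the extent. -/
def mixedExtent {d : ℕ} (S : Set (Fin d → ℂ)) (ρ : Matrix (Fin d) (Fin d) ℂ) : ℝ :=
  sInf {r : ℝ | ∃ (m : ℕ) (p : Fin m → ℝ) (Ψ : Fin m → (Fin d → ℂ)),
    (∀ j, 0 ≤ p j) ∧ (∑ j, p j) = 1 ∧ (∀ j, star (Ψ j) ⬝ᵥ Ψ j = 1) ∧
    ρ = ∑ j, (p j : ℂ) • dyadM (Ψ j) (Ψ j) ∧ r = ∑ j, p j * extent S (Ψ j)}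

/-! ### Auxiliary lemmas -/

lemma vecMulVec_sum_left {d : ℕ} {ι : Type*} (s : Finset ι) (f : ι → ℂ)
    (v : ι → Fin d → ℂ) (w : Fin d → ℂ) :
    Matrix.vecMulVec (∑ i ∈ s, f i • v i) w = ∑ i ∈ s, f i • Matrix.vecMulVec (v i) w := by
  ext a b
  simp only [Matrix.vecMulVec_apply, Finset.sum_apply, Pi.smul_apply, smul_eq_mul,
    Matrix.sum_apply, Matrix.smul_apply, Finset.sum_mul]
  exact Finset.sum_congr rfl fun i _ => by ring

lemma vecMulVec_sum_right {d : ℕ} {ι : Type*} (s : Finset ι) (L : Fin d → ℂ) (f : ι → ℂ)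
    (w : ι → Fin d → ℂ) :
    Matrix.vecMulVec L (∑ i ∈ s, f i • w i) = ∑ i ∈ s, f i • Matrix.vecMulVec L (w i) := by
  ext a b
  simp only [Matrix.vecMulVec_apply, Finset.sum_apply, Pi.smul_apply, smul_eq_mul,
    Matrix.sum_apply, Matrix.smul_apply, Finset.mul_sum]
  exact Finset.sum_congr rfl fun i _ => by ring

lemma trace_mul_dyadM {d : ℕ} (W : Matrix (Fin d) (Fin d) ℂ) (L R : Fin d → ℂ) :
    (W * dyadM L R).trace = star R ⬝ᵥ (W *ᵥ L) := by
  simp only [dyadM, Matrix.trace, Matrix.diag, Matrix.mul_apply, Matrix.vecMulVec_apply,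
    dotProduct, Matrix.mulVec, Pi.star_apply, Finset.mul_sum]
  exact Finset.sum_congr rfl fun i _ => Finset.sum_congr rfl fun k _ => by
    simp only [RCLike.star_def]; ring

open MatrixOrder in
lemma psd_exists_B {d : ℕ} {W : Matrix (Fin d) (Fin d) ℂ} (hW : W.PosSemidef) :
    ∃ B : Matrix (Fin d) (Fin d) ℂ, W = Bᴴ * B := by
  have h0 : 0 ≤ W := hW.nonneg
  refine ⟨CFC.sqrt W, ?_⟩
  have hs : IsSelfAdjoint (CFC.sqrt W) := (CFC.sqrt_nonneg W).isSelfAdjoint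
  rw [← Matrix.star_eq_conjTranspose, hs.star_eq, CFC.sqrt_mul_sqrt_self W h0]

lemma psd_cauchy_schwarz {d : ℕ} {W : Matrix (Fin d) (Fin d) ℂ} (hW : W.PosSemidef)
    (L R : Fin d → ℂ) (hL : (star L ⬝ᵥ (W *ᵥ L)).re ≤ 1) (hR : (star R ⬝ᵥ (W *ᵥ R)).re ≤ 1) :
    ‖star R ⬝ᵥ (W *ᵥ L)‖ ≤ 1 := by
  obtain ⟨B, rfl⟩ := psd_exists_B hW
  have key : ∀ x y : Fin d → ℂ, star x ⬝ᵥ ((Bᴴ * B) *ᵥ y) = star (B *ᵥ x) ⬝ᵥ (B *ᵥ y) := by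
    intro x y
    rw [← Matrix.mulVec_mulVec, Matrix.dotProduct_mulVec, ← Matrix.star_mulVec]
  rw [key]
  have keyre : ∀ x : Fin d → ℂ, (star x ⬝ᵥ x).re = ‖(WithLp.equiv 2 (Fin d → ℂ)).symm x‖ ^ 2 := by
    intro x
    rw [← inner_self_eq_norm_sq (𝕜 := ℂ), WithLp.equiv_symm_apply, EuclideanSpace.inner_toLp_toLp,
      dotProduct_comm]
    rfl
  set u := B *ᵥ R
  set v := B *ᵥ L
  have h1 : ‖(WithLp.equiv 2 (Fin d → ℂ)).symm u‖ ≤ 1 := by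
    have h : (star u ⬝ᵥ u).re ≤ 1 := by rw [key] at hR; exact hR
    rw [keyre u] at h
    nlinarith [norm_nonneg ((WithLp.equiv 2 (Fin d → ℂ)).symm u)]
  have h2 : ‖(WithLp.equiv 2 (Fin d → ℂ)).symm v‖ ≤ 1 := by
    have h : (star v ⬝ᵥ v).re ≤ 1 := by rw [key] at hL; exact hL
    rw [keyre v] at h
    nlinarith [norm_nonneg ((WithLp.equiv 2 (Fin d → ℂ)).symm v)]
  calc ‖star u ⬝ᵥ v‖
      = ‖(inner ℂ ((WithLp.equiv 2 (Fin d → ℂ)).symm u) ((WithLp.equiv 2 (Fin d → ℂ)).symm v) : ℂ)‖ := by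
        rw [WithLp.equiv_symm_apply, EuclideanSpace.inner_toLp_toLp, dotProduct_comm]
    _ ≤ ‖(WithLp.equiv 2 (Fin d → ℂ)).symm u‖ * ‖(WithLp.equiv 2 (Fin d → ℂ)).symm v‖ :=
        norm_inner_le_norm _ _
    _ ≤ 1 := by nlinarith [norm_nonneg ((WithLp.equiv 2 (Fin d → ℂ)).symm u),
        norm_nonneg ((WithLp.equiv 2 (Fin d → ℂ)).symm v)]

lemma mem_span_dyads {d : ℕ} (S : Finset (Fin d → ℂ))
    (hspan : Submodule.span ℂ (S : Set (Fin d → ℂ)) = ⊤) (M : Matrix (Fin d) (Fin d) ℂ) :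
    M ∈ Submodule.span ℂ {A : Matrix (Fin d) (Fin d) ℂ |
      ∃ L ∈ (S : Set (Fin d → ℂ)), ∃ R ∈ (S : Set (Fin d → ℂ)), A = dyadM L R} := by
  set T : Set (Matrix (Fin d) (Fin d) ℂ) := {A | ∃ L ∈ (S : Set (Fin d → ℂ)),
    ∃ R ∈ (S : Set (Fin d → ℂ)), A = dyadM L R} with hT
  have stepA : ∀ (L : Fin d → ℂ) (R : Fin d → ℂ), R ∈ S →
      Matrix.vecMulVec L (star R) ∈ Submodule.span ℂ T := by
    intro L R hR
    have hL : L ∈ Submodule.span ℂ (S : Set (Fin d → ℂ)) := hspan ▸ Submodule.mem_top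
    obtain ⟨n, f, g, hg⟩ := Submodule.mem_span_set'.mp hL
    rw [← hg, vecMulVec_sum_left]
    refine Submodule.sum_mem _ fun i _ => Submodule.smul_mem _ _ (Submodule.subset_span ?_)
    exact ⟨(g i : Fin d → ℂ), (g i).2, R, hR, rfl⟩
  have stepB : ∀ (L w : Fin d → ℂ), Matrix.vecMulVec L w ∈ Submodule.span ℂ T := by
    intro L w
    have hw : star w ∈ Submodule.span ℂ (S : Set (Fin d → ℂ)) := hspan ▸ Submodule.mem_top
    obtain ⟨n, f, g, hg⟩ := Submodule.mem_span_set'.mp hw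
    have hw2 : w = ∑ i, star (f i) • star (g i : Fin d → ℂ) := by
      calc w = star (star w) := (star_star w).symm
        _ = star (∑ i, f i • (g i : Fin d → ℂ)) := by rw [hg]
        _ = ∑ i, star (f i) • star (g i : Fin d → ℂ) := by
            rw [star_sum]; simp only [star_smul]
    rw [hw2, vecMulVec_sum_right]
    exact Submodule.sum_mem _ fun i _ => Submodule.smul_mem _ _ (stepA L (g i) (g i).2)
  have stepC : M = ∑ p : Fin d × Fin d,
      M p.1 p.2 • Matrix.vecMulVec (Pi.single p.1 1) (Pi.single p.2 1) := by
    ext a b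
    simp only [Matrix.sum_apply, Matrix.smul_apply, Matrix.vecMulVec_apply, Pi.single_apply,
      smul_eq_mul, Fintype.sum_prod_type]
    simp [Finset.sum_ite_eq', mul_ite]
  rw [stepC]
  exact Submodule.sum_mem _ fun p _ => Submodule.smul_mem _ _ (stepB _ _)

lemma rc_ofReal (x : ℝ) : (RCLike.ofReal x : ℂ) = Complex.ofReal x := rfl

lemma exists_pure_decomp {d : ℕ} (ρ : Matrix (Fin d) (Fin d) ℂ)
    (hρ : ρ.PosSemidef) (htr : ρ.trace = 1) :
    ∃ (p : Fin d → ℝ) (Ψ : Fin d → (Fin d → ℂ)), (∀ j, 0 ≤ p j) ∧ (∑ j, p j) = 1 ∧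
      (∀ j, star (Ψ j) ⬝ᵥ Ψ j = 1) ∧ ρ = ∑ j, (p j : ℂ) • dyadM (Ψ j) (Ψ j) := by
  have hH := hρ.1
  set p : Fin d → ℝ := hH.eigenvalues with hp
  set Ψ : Fin d → (Fin d → ℂ) := fun j => ⇑(hH.eigenvectorBasis j) with hΨ
  have hnorm : ∀ j, star (Ψ j) ⬝ᵥ Ψ j = 1 := by
    intro j
    have h1 : ‖hH.eigenvectorBasis j‖ = 1 := hH.eigenvectorBasis.orthonormal.1 j
    have h2 : (inner ℂ (hH.eigenvectorBasis j) (hH.eigenvectorBasis j) : ℂ) = 1 := by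
      rw [inner_self_eq_norm_sq_to_K, h1]; norm_num
    rw [← h2, EuclideanSpace.inner_eq_star_dotProduct, dotProduct_comm]
  have hdecomp : ρ = ∑ j, (p j : ℂ) • dyadM (Ψ j) (Ψ j) := by
    conv_lhs => rw [hH.spectral_theorem, Unitary.conjStarAlgAut_apply]
    ext a b
    rw [Matrix.mul_apply]
    simp only [Matrix.sum_apply, Matrix.smul_apply, dyadM, Matrix.vecMulVec_apply,
      Pi.star_apply, Matrix.mul_diagonal, Function.comp_apply, smul_eq_mul,
      Matrix.star_apply, hH.eigenvectorUnitary_apply, RCLike.star_def]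
    refine Finset.sum_congr rfl fun j _ => ?_
    simp only [hp, hΨ, rc_ofReal]
    ring
  have hsum : (∑ j, p j) = 1 := by
    have h1 : ρ.trace = ∑ j, (p j : ℂ) := by
      rw [hdecomp, Matrix.trace_sum]
      refine Fintype.sum_congr _ _ fun j => ?_
      rw [Matrix.trace_smul, smul_eq_mul]
      have ht : (dyadM (Ψ j) (Ψ j)).trace = 1 := by
        have : (dyadM (Ψ j) (Ψ j)).trace = star (Ψ j) ⬝ᵥ Ψ j := by
          simp only [dyadM, Matrix.trace, Matrix.diag, Matrix.vecMulVec_apply, dotProduct,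
            Pi.star_apply]
          exact Finset.sum_congr rfl fun i _ => by ring
        rw [this, hnorm]
      rw [ht, mul_one]
    rw [htr] at h1
    have := h1.symm
    rw [← Complex.ofReal_sum] at this
    exact_mod_cast this
  exact ⟨p, Ψ, fun j => hρ.eigenvalues_nonneg j, hsum, hnorm, hdecomp⟩

lemma dyadM_sum {d n : ℕ} (c : Fin n → ℂ) (φ : Fin n → Fin d → ℂ) :
    dyadM (∑ k, c k • φ k) (∑ l, c l • φ l) =
      ∑ k, ∑ l, (c k * star (c l)) • dyadM (φ k) (φ l) := by
  ext a b
  simp only [dyadM, Matrix.vecMulVec_apply, Pi.star_apply, Finset.sum_apply, Pi.smul_apply,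
    smul_eq_mul, map_sum, Matrix.sum_apply, Matrix.smul_apply, RCLike.star_def]
  rw [Finset.sum_mul_sum]
  exact Finset.sum_congr rfl fun k _ => Finset.sum_congr rfl fun l _ => by
    rw [RingHom.map_mul]; ring

lemma my_le_of_forall_pos_le_add {a b : ℝ} (h : ∀ ε : ℝ, 0 < ε → a ≤ b + ε) : a ≤ b := by
  by_contra hc
  push_neg at hc
  have := h ((a - b) / 2) (by linarith)
  linarith

/-- **Sandwich inequality** `Λ⁺(ρ) ≤ Λ(ρ) ≤ Ξ(ρ)` for any density matrix `ρ`,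
assuming the duality for the dyadic negativity. -/
theorem sandwich_inequality {d : ℕ} (S : Finset (Fin d → ℂ))
    (hunit : ∀ φ ∈ S, star φ ⬝ᵥ φ = 1)
    (hspan : Submodule.span ℂ (S : Set (Fin d → ℂ)) = ⊤)
    (ρ : Matrix (Fin d) (Fin d) ℂ) (hρ : ρ.PosSemidef) (htr : ρ.trace = 1)
    (hdual : dyadicNeg (S : Set (Fin d → ℂ)) ρ =
      sSup {r : ℝ | ∃ W : Matrix (Fin d) (Fin d) ℂ, W.IsHermitian ∧
        (∀ L ∈ S, ∀ R ∈ S, ‖star L ⬝ᵥ (W *ᵥ R)‖ ≤ 1) ∧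
        r = ((W * ρ).trace).re}) :
    genRob (S : Set (Fin d → ℂ)) ρ ≤ dyadicNeg (S : Set (Fin d → ℂ)) ρ ∧
    dyadicNeg (S : Set (Fin d → ℂ)) ρ ≤ mixedExtent (S : Set (Fin d → ℂ)) ρ := by
  classical
  set Dset : Set ℝ := {r : ℝ | ∃ (m : ℕ) (α : Fin m → ℂ) (L R : Fin m → (Fin d → ℂ)),
    (∀ j, L j ∈ (S : Set (Fin d → ℂ))) ∧ (∀ j, R j ∈ (S : Set (Fin d → ℂ))) ∧
    ρ = ∑ j, α j • dyadM (L j) (R j) ∧ r = ∑ j, ‖α j‖} with hDset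
  have hDN : dyadicNeg (S : Set (Fin d → ℂ)) ρ = sInf Dset := rfl
  -- D is nonempty
  have hDne : Dset.Nonempty := by
    obtain ⟨n, f, g, hg⟩ := Submodule.mem_span_set'.mp (mem_span_dyads S hspan ρ)
    have hgpr : ∀ i, ∃ L ∈ (S : Set (Fin d → ℂ)), ∃ R ∈ (S : Set (Fin d → ℂ)),
        (g i : Matrix (Fin d) (Fin d) ℂ) = dyadM L R := fun i => (g i).2
    choose Lf hLf Rf hRf hEq using hgpr
    refine ⟨∑ i, ‖f i‖, n, f, Lf, Rf, hLf, hRf, ?_, rfl⟩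
    rw [← hg]
    exact Finset.sum_congr rfl fun i _ => by rw [hEq i]
  have hDnonneg : ∀ r ∈ Dset, 0 ≤ r := by
    rintro r ⟨m, α, L, R, _, _, _, rfl⟩
    exact Finset.sum_nonneg fun j _ => norm_nonneg _
  have hDbdd : BddBelow Dset := ⟨0, fun r hr => hDnonneg r hr⟩
  have hΛnonneg : 0 ≤ dyadicNeg (S : Set (Fin d → ℂ)) ρ := by
    rw [hDN]; exact Real.sInf_nonneg hDnonneg
  constructor
  · -- Part 1 : genRob ≤ dyadicNeg
    refine Real.sSup_le ?_ hΛnonneg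
    rintro x ⟨W, hWpsd, hWfree, rfl⟩
    rw [hDN]
    refine le_csInf hDne ?_
    rintro b ⟨m, α, L, R, hL, hR, hρeq, rfl⟩
    have htrace : (W * ρ).trace = ∑ j, α j * (star (R j) ⬝ᵥ (W *ᵥ L j)) := by
      rw [hρeq, Matrix.mul_sum, Matrix.trace_sum]
      exact Finset.sum_congr rfl fun j _ => by
        rw [Matrix.mul_smul, Matrix.trace_smul, trace_mul_dyadM, smul_eq_mul]
    calc ((W * ρ).trace).re ≤ ‖(W * ρ).trace‖ := Complex.re_le_norm _
      _ = ‖∑ j, α j * (star (R j) ⬝ᵥ (W *ᵥ L j))‖ := by rw [htrace]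
      _ ≤ ∑ j, ‖α j * (star (R j) ⬝ᵥ (W *ᵥ L j))‖ :=
          norm_sum_le _ _
      _ = ∑ j, ‖α j‖ * ‖star (R j) ⬝ᵥ (W *ᵥ L j)‖ := by
          exact Finset.sum_congr rfl fun j _ => norm_mul _ _
      _ ≤ ∑ j, ‖α j‖ * 1 := by
          refine Finset.sum_le_sum fun j _ => ?_
          exact mul_le_mul_of_nonneg_left
            (psd_cauchy_schwarz hWpsd (L j) (R j) (hWfree _ (hL j)) (hWfree _ (hR j)))
            (norm_nonneg _)
      _ = ∑ j, ‖α j‖ := by simp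
  · -- Part 2 : dyadicNeg ≤ mixedExtent
    have hEne : {r : ℝ | ∃ (m : ℕ) (p : Fin m → ℝ) (Ψ : Fin m → (Fin d → ℂ)),
        (∀ j, 0 ≤ p j) ∧ (∑ j, p j) = 1 ∧ (∀ j, star (Ψ j) ⬝ᵥ Ψ j = 1) ∧
        ρ = ∑ j, (p j : ℂ) • dyadM (Ψ j) (Ψ j) ∧
        r = ∑ j, p j * extent (S : Set (Fin d → ℂ)) (Ψ j)}.Nonempty := by
      obtain ⟨p, Ψ, h1, h2, h3, h4⟩ := exists_pure_decomp ρ hρ htr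
      exact ⟨∑ j, p j * extent (S : Set (Fin d → ℂ)) (Ψ j), d, p, Ψ, h1, h2, h3, h4, rfl⟩
    refine le_csInf hEne ?_
    rintro r ⟨m, p, Ψ, hp, hpsum, hΨnorm, hρeq, rfl⟩
    refine my_le_of_forall_pos_le_add ?_
    intro ε hε
    -- for each j, choose a near-optimal decomposition of Ψ j
    have hchoice : ∀ j : Fin m, ∃ (n : ℕ) (c : Fin n → ℂ) (φ : Fin n → (Fin d → ℂ)),
        (∀ k, φ k ∈ (S : Set (Fin d → ℂ))) ∧ Ψ j = ∑ k, c k • φ k ∧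
        (∑ k, ‖c k‖) ^ 2 ≤ extent (S : Set (Fin d → ℂ)) (Ψ j) + ε := by
      intro j
      set ξset : Set ℝ := {r : ℝ | ∃ (n : ℕ) (c : Fin n → ℂ) (φ : Fin n → (Fin d → ℂ)),
        (∀ k, φ k ∈ (S : Set (Fin d → ℂ))) ∧ Ψ j = ∑ k, c k • φ k ∧
        r = (∑ k, ‖c k‖) ^ 2} with hξ
      have hξne : ξset.Nonempty := by
        have hmem : Ψ j ∈ Submodule.span ℂ (S : Set (Fin d → ℂ)) := hspan ▸ Submodule.mem_top
        obtain ⟨n, f, g, hg⟩ := Submodule.mem_span_set'.mp hmem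
        exact ⟨(∑ i, ‖f i‖) ^ 2, n, f, fun i => (g i : Fin d → ℂ),
          fun i => (g i).2, hg.symm, rfl⟩
      obtain ⟨t, ht, htlt⟩ := Real.lt_sInf_add_pos hξne hε
      obtain ⟨n, c, φ, hφ, hΨeq, hteq⟩ := ht
      exact ⟨n, c, φ, hφ, hΨeq, by
        rw [← hteq]
        exact le_of_lt htlt⟩
    choose nn cc φφ hφmem hΨeq hext using hchoice
    -- build the dyadic decomposition of ρ
    set I := (j : Fin m) × (Fin (nn j) × Fin (nn j)) with hI
    set e : I ≃ Fin (Fintype.card I) := Fintype.equivFin I with he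
    set F : I → ℂ := fun x => (p x.1 : ℂ) * (cc x.1 x.2.1 * star (cc x.1 x.2.2)) with hF
    set FL : I → (Fin d → ℂ) := fun x => φφ x.1 x.2.1 with hFL
    set FR : I → (Fin d → ℂ) := fun x => φφ x.1 x.2.2 with hFR
    have hρdec : ρ = ∑ i : Fin (Fintype.card I),
        (F (e.symm i)) • dyadM (FL (e.symm i)) (FR (e.symm i)) := by
      rw [Equiv.sum_comp e.symm (fun x => F x • dyadM (FL x) (FR x))]
      rw [← Finset.univ_sigma_univ, Finset.sum_sigma]
      rw [hρeq]
      refine Finset.sum_congr rfl fun j _ => ?_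
      rw [Fintype.sum_prod_type]
      have : dyadM (Ψ j) (Ψ j) = ∑ k, ∑ l, (cc j k * star (cc j l)) • dyadM (φφ j k) (φφ j l) := by
        rw [hΨeq j]; exact dyadM_sum _ _
      rw [this, Finset.smul_sum]
      refine Finset.sum_congr rfl fun k _ => ?_
      rw [Finset.smul_sum]
      refine Finset.sum_congr rfl fun l _ => ?_
      rw [smul_smul]
    have habs : ∑ i : Fin (Fintype.card I), ‖F (e.symm i)‖ =
        ∑ j, p j * (∑ k, ‖cc j k‖) ^ 2 := by
      rw [Equiv.sum_comp e.symm (fun x => ‖F x‖)]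
      rw [← Finset.univ_sigma_univ, Finset.sum_sigma]
      refine Finset.sum_congr rfl fun j _ => ?_
      rw [Fintype.sum_prod_type]
      have : ∀ k l, ‖(p j : ℂ) * (cc j k * star (cc j l))‖ =
          p j * (‖cc j k‖ * ‖cc j l‖) := by
        intro k l
        rw [norm_mul, norm_mul, Complex.norm_real, Real.norm_eq_abs,
          abs_of_nonneg (hp j), RCLike.star_def, Complex.norm_conj]
      simp only [hF, this]
      simp only [← Finset.mul_sum]
      rw [sq, Finset.sum_mul]
    have hmemD : (∑ j, p j * (∑ k, ‖cc j k‖) ^ 2) ∈ Dset :=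
      ⟨Fintype.card I, fun i => F (e.symm i), fun i => FL (e.symm i), fun i => FR (e.symm i),
        fun i => hφmem _ _, fun i => hφmem _ _, hρdec, habs.symm⟩
    calc dyadicNeg (S : Set (Fin d → ℂ)) ρ ≤ ∑ j, p j * (∑ k, ‖cc j k‖) ^ 2 := by
          rw [hDN]; exact csInf_le hDbdd hmemD
      _ ≤ ∑ j, p j * (extent (S : Set (Fin d → ℂ)) (Ψ j) + ε) :=
          Finset.sum_le_sum fun j _ => mul_le_mul_of_nonneg_left (hext j) (hp j)
      _ = (∑ j, p j * extent (S : Set (Fin d → ℂ)) (Ψ j)) + ε := by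
          simp only [mul_add]
          rw [Finset.sum_add_distrib, ← Finset.sum_mul, hpsum, one_mul]
end
end

section
/- If |Ψ⟩ is a non-free pure state (i.e., requiring at least two nonzero terms in any free decomposition) and |ω⟩ is an ω-witness achieving |⟨ω|Ψ⟩|² = ξ(Ψ), then for every optimal decomposition Ψ = Σⱼ cⱼφⱼ with (Σⱼ|cⱼ|)² = ξ(Ψ), each index j with cⱼ ≠ 0 satisfies |⟨ω|φⱼ⟩| = 1; in particular at least two distinct free states φ have |⟨ω|φ⟩| = 1. -/
open Matrix
open scoped ComplexOrder

noncomputable section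

/-- **Equality case of the witness bound.**  If `Ψ` is a non-free pure state (every
free decomposition has at least two nonzero terms) and `ω` is an `ω`-witness with
`|⟨ω|Ψ⟩|² = ξ(Ψ)`, then in every optimal decomposition `Ψ = Σⱼ cⱼ φⱼ` with
`(Σⱼ|cⱼ|)² = ξ(Ψ)` each `j` with `cⱼ ≠ 0` satisfies `|⟨ω|φⱼ⟩| = 1`; in particular
at least two distinct free states have overlap of modulus one with `ω`. -/
theorem optimal_decomposition_overlap {d : ℕ} (S : Finset (Fin d → ℂ))
    (hunit : ∀ φ ∈ S, star φ ⬝ᵥ φ = 1)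
    (Ψ : Fin d → ℂ)
    (hnonfree : ∀ (m : ℕ) (c : Fin m → ℂ) (φ : Fin m → (Fin d → ℂ)),
      (∀ j, φ j ∈ S) → Ψ = ∑ j, c j • φ j →
      1 < (Finset.univ.filter fun j => c j ≠ 0).card)
    (ω : Fin d → ℂ)
    (hω : ∀ φ ∈ S, ‖star ω ⬝ᵥ φ‖ ≤ 1)
    (hopt : ‖star ω ⬝ᵥ Ψ‖ ^ 2 = extent (S : Set (Fin d → ℂ)) Ψ)
    (m : ℕ) (c : Fin m → ℂ) (φ : Fin m → (Fin d → ℂ))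
    (hφ : ∀ j, φ j ∈ S) (hdec : Ψ = ∑ j, c j • φ j)
    (hoptdec : (∑ j, ‖c j‖) ^ 2 = extent (S : Set (Fin d → ℂ)) Ψ) :
    (∀ j, c j ≠ 0 → ‖star ω ⬝ᵥ φ j‖ = 1) ∧
    ∃ φ₁ ∈ S, ∃ φ₂ ∈ S, φ₁ ≠ φ₂ ∧
      ‖star ω ⬝ᵥ φ₁‖ = 1 ∧ ‖star ω ⬝ᵥ φ₂‖ = 1 := by
  have hΨ : star ω ⬝ᵥ Ψ = ∑ j, c j * (star ω ⬝ᵥ φ j) := by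
    rw [hdec]
    simp only [dotProduct, Finset.mul_sum, smul_eq_mul, Pi.smul_apply,
      Finset.sum_apply, Finset.sum_mul]
    rw [Finset.sum_comm]
    exact Finset.sum_congr rfl fun j _ => Finset.sum_congr rfl fun i _ => by ring
  have h1 : ‖star ω ⬝ᵥ Ψ‖ ≤
      ∑ j, ‖c j‖ * ‖star ω ⬝ᵥ φ j‖ := by
    rw [hΨ]
    calc ‖∑ j, c j * (star ω ⬝ᵥ φ j)‖
        ≤ ∑ j, ‖c j * (star ω ⬝ᵥ φ j)‖ :=
          norm_sum_le _ _
      _ = ∑ j, ‖c j‖ * ‖star ω ⬝ᵥ φ j‖ := by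
          simp [_root_.map_mul]
  have hle2 : ∀ j ∈ Finset.univ,
      ‖c j‖ * ‖star ω ⬝ᵥ φ j‖ ≤ ‖c j‖ :=
    fun j _ => mul_le_of_le_one_right (norm_nonneg _) (hω _ (hφ j))
  have heq : ‖star ω ⬝ᵥ Ψ‖ = ∑ j, ‖c j‖ := by
    have h := hopt.trans hoptdec.symm
    have h0 : (0:ℝ) ≤ ‖star ω ⬝ᵥ Ψ‖ := norm_nonneg _
    have h0' : (0:ℝ) ≤ ∑ j, ‖c j‖ :=
      Finset.sum_nonneg fun j _ => norm_nonneg _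
    nlinarith
  have hsum : ∑ j, ‖c j‖ * ‖star ω ⬝ᵥ φ j‖
      = ∑ j, ‖c j‖ :=
    le_antisymm (Finset.sum_le_sum hle2) (heq ▸ h1)
  have hterm : ∀ j, c j ≠ 0 → ‖star ω ⬝ᵥ φ j‖ = 1 := by
    intro j hj
    have key := (Finset.sum_eq_sum_iff_of_le hle2).mp hsum j (Finset.mem_univ j)
    have hc : ‖c j‖ ≠ 0 := by simpa using hj
    exact mul_left_cancel₀ hc (key.trans (mul_one _).symm)
  refine ⟨hterm, ?_⟩
  have hcard := hnonfree m c φ hφ hdec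
  have hne : (Finset.univ.filter fun j => c j ≠ 0).Nonempty :=
    Finset.card_pos.mp (by omega)
  obtain ⟨j₀, hj₀⟩ := hne
  have hj₀' : c j₀ ≠ 0 := (Finset.mem_filter.mp hj₀).2
  by_contra hcon
  push_neg at hcon
  have hall : ∀ j, c j ≠ 0 → φ j = φ j₀ := by
    intro j hj
    by_contra hne'
    exact hcon (φ j) (hφ j) (φ j₀) (hφ j₀) hne' (hterm j hj) (hterm j₀ hj₀')
  have hΨ1 : Ψ = ∑ j : Fin 1, (![∑ j, c j] j) • (![φ j₀] j) := by
    simp only [Fin.sum_univ_one, Matrix.cons_val_zero]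
    rw [hdec, Finset.sum_smul]
    refine Finset.sum_congr rfl fun j _ => ?_
    by_cases hj : c j = 0
    · simp [hj]
    · rw [hall j hj]
  have h1' := hnonfree 1 ![∑ j, c j] ![φ j₀]
    (by intro j; fin_cases j; simpa using hφ j₀) hΨ1
  have hle : (Finset.univ.filter fun j : Fin 1 => ![∑ j, c j] j ≠ 0).card ≤ 1 :=
    (Finset.card_filter_le _ _).trans (by simp)
  omega
end
end

section
/- For any density matrix ρ, the robustness satisfies ℛ(ρ) ≥ 2Λ⁺(ρ) − 1. -/
open Matrix
open scoped ComplexOrder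

noncomputable section

/-- The robustness `ℛ(ρ)`: minimal `‖q‖₁` over real quasiprobability
decompositions of `ρ` into projectors onto free states. -/
def robustness {d : ℕ} (S : Set (Fin d → ℂ)) (ρ : Matrix (Fin d) (Fin d) ℂ) : ℝ :=
  sInf {r : ℝ | ∃ (m : ℕ) (q : Fin m → ℝ) (φ : Fin m → (Fin d → ℂ)),
    (∀ j, φ j ∈ S) ∧ ρ = ∑ j, (q j : ℂ) • dyadM (φ j) (φ j) ∧ r = ∑ j, |q j|}

lemma trace_mul_dyad {d : ℕ} (W : Matrix (Fin d) (Fin d) ℂ) (φ : Fin d → ℂ) :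
    (W * dyadM φ φ).trace = star φ ⬝ᵥ (W *ᵥ φ) := by
  simp only [Matrix.trace, Matrix.diag, Matrix.mul_apply, dyadM, Matrix.vecMulVec_apply,
    dotProduct, Matrix.mulVec, Pi.star_apply, Finset.mul_sum]
  congr 1; ext i; congr 1; ext k; ring

lemma trace_dyad {d : ℕ} (φ : Fin d → ℂ) :
    (dyadM φ φ).trace = star φ ⬝ᵥ φ := by
  simp only [Matrix.trace, Matrix.diag, dyadM, Matrix.vecMulVec_apply, dotProduct,
    Pi.star_apply]
  congr 1; ext i; ring


/-- **Robustness vs generalized robustness.**  For any density matrix `ρ`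
(admitting at least one quasiprobability decomposition over the free states),
`ℛ(ρ) ≥ 2Λ⁺(ρ) − 1`. -/
theorem robustness_ge_two_genRob_sub_one {d : ℕ} (S : Finset (Fin d → ℂ))
    (hunit : ∀ φ ∈ S, star φ ⬝ᵥ φ = 1)
    (ρ : Matrix (Fin d) (Fin d) ℂ) (hρ : ρ.PosSemidef) (htr : ρ.trace = 1)
    (hfeas : ∃ (m : ℕ) (q : Fin m → ℝ) (φ : Fin m → (Fin d → ℂ)),
      (∀ j, φ j ∈ S) ∧ ρ = ∑ j, (q j : ℂ) • dyadM (φ j) (φ j)) :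
    2 * genRob (S : Set (Fin d → ℂ)) ρ - 1 ≤ robustness (S : Set (Fin d → ℂ)) ρ := by
  obtain ⟨m₀, q₀, φ₀, hφ₀, hdec₀⟩ := hfeas
  have hRne : {r : ℝ | ∃ (m : ℕ) (q : Fin m → ℝ) (φ : Fin m → (Fin d → ℂ)),
      (∀ j, φ j ∈ (S : Set (Fin d → ℂ))) ∧ ρ = ∑ j, (q j : ℂ) • dyadM (φ j) (φ j) ∧
      r = ∑ j, |q j|}.Nonempty :=
    ⟨∑ j, |q₀ j|, m₀, q₀, φ₀, fun j => hφ₀ j, hdec₀, rfl⟩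
  have hRnn : 0 ≤ robustness (S : Set (Fin d → ℂ)) ρ := by
    unfold robustness; apply Real.sInf_nonneg
    rintro r ⟨m, q, φ, -, -, rfl⟩
    positivity
  have key : ∀ t ∈ {r : ℝ | ∃ W : Matrix (Fin d) (Fin d) ℂ, W.PosSemidef ∧
      (∀ φ ∈ (S : Set (Fin d → ℂ)), (star φ ⬝ᵥ (W *ᵥ φ)).re ≤ 1) ∧ r = ((W * ρ).trace).re},
      t ≤ (robustness (S : Set (Fin d → ℂ)) ρ + 1) / 2 := by
    rintro t ⟨W, hW, hWφ, rfl⟩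
    have hle : 2 * ((W * ρ).trace).re - 1 ≤ robustness (S : Set (Fin d → ℂ)) ρ := by
      unfold robustness; apply le_csInf hRne
      rintro r ⟨m, q, φ, hφ, hdec, rfl⟩
      -- compute trace
      have htrW : ((W * ρ).trace) = ∑ j, (q j : ℂ) * (star (φ j) ⬝ᵥ (W *ᵥ φ j)) := by
        rw [hdec, Finset.mul_sum, Matrix.trace_sum]
        congr 1; ext j
        rw [Matrix.mul_smul, Matrix.trace_smul, trace_mul_dyad]
        simp [smul_eq_mul]
      have hsumq : (∑ j, q j) = 1 := by
        have : ρ.trace = ∑ j, (q j : ℂ) := by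
          rw [hdec, Matrix.trace_sum]
          congr 1; ext j
          rw [Matrix.trace_smul, trace_dyad, hunit _ (hφ j)]
          simp
        rw [htr] at this
        exact_mod_cast this.symm
      set c : Fin m → ℝ := fun j => (star (φ j) ⬝ᵥ (W *ᵥ φ j)).re with hc
      have hre : ((W * ρ).trace).re = ∑ j, q j * c j := by
        rw [htrW, Complex.re_sum]
        congr 1; ext j
        simp [hc, Complex.mul_re]
      have hc0 : ∀ j, 0 ≤ c j := fun j => by
        have := hW.dotProduct_mulVec_nonneg (φ j)
        simpa [hc] using (Complex.le_def.mp this).1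
      have hc1 : ∀ j, c j ≤ 1 := fun j => hWφ (φ j) (hφ j)
      rw [hre]
      have : 2 * (∑ j, q j * c j) - (∑ j, q j) ≤ ∑ j, |q j| := by
        rw [Finset.mul_sum, ← Finset.sum_sub_distrib]
        apply Finset.sum_le_sum
        intro j _
        have h1 : 2 * (q j * c j) - q j = q j * (2 * c j - 1) := by ring
        rw [h1]
        calc q j * (2 * c j - 1) ≤ |q j * (2 * c j - 1)| := le_abs_self _
          _ = |q j| * |2 * c j - 1| := abs_mul _ _
          _ ≤ |q j| * 1 := by
              apply mul_le_mul_of_nonneg_left _ (abs_nonneg _)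
              rw [abs_le]; constructor <;> [linarith [hc0 j]; linarith [hc1 j]]
          _ = |q j| := mul_one _
      linarith [this, hsumq.symm ▸ this]
    linarith
  have hG : genRob (S : Set (Fin d → ℂ)) ρ ≤ (robustness (S : Set (Fin d → ℂ)) ρ + 1) / 2 := by
    unfold genRob; apply Real.sSup_le key
    positivity
  linarith
end
end

section
/- For any single-qubit state ρ, the robustness satisfies ℛ(ρ) ≥ (1+√2)Λ⁺(ρ) − √2. -/
open Matrix
open scoped ComplexOrder

noncomputable section

/-- Pauli `X`. -/
def PauliX : Matrix (Fin 2) (Fin 2) ℂ := !![0, 1; 1, 0]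
/-- Pauli `Y`. -/
def PauliY : Matrix (Fin 2) (Fin 2) ℂ := !![0, -Complex.I; Complex.I, 0]
/-- Pauli `Z`. -/
def PauliZ : Matrix (Fin 2) (Fin 2) ℂ := !![1, 0; 0, -1]

/-- The six single-qubit stabilizer state vectors. -/
def ket0 : Fin 2 → ℂ := ![1, 0]
def ket1 : Fin 2 → ℂ := ![0, 1]
def ketPlus : Fin 2 → ℂ := ![(Real.sqrt 2 : ℂ)⁻¹, (Real.sqrt 2 : ℂ)⁻¹]
def ketMinus : Fin 2 → ℂ := ![(Real.sqrt 2 : ℂ)⁻¹, -(Real.sqrt 2 : ℂ)⁻¹]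
def ketPlusI : Fin 2 → ℂ := ![(Real.sqrt 2 : ℂ)⁻¹, Complex.I * (Real.sqrt 2 : ℂ)⁻¹]
def ketMinusI : Fin 2 → ℂ := ![(Real.sqrt 2 : ℂ)⁻¹, -(Complex.I * (Real.sqrt 2 : ℂ)⁻¹)]

/-- The set of the six single-qubit stabilizer states. -/
def stab1 : Set (Fin 2 → ℂ) := {ket0, ket1, ketPlus, ketMinus, ketPlusI, ketMinusI}

/-- Expectation value `⟨M⟩ = Tr[ρ M]` (real part). -/
def expv (ρ M : Matrix (Fin 2) (Fin 2) ℂ) : ℝ := ((ρ * M).trace).re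

set_option maxHeartbeats 1000000

lemma c2_mul : ((Real.sqrt 2 : ℂ))⁻¹ * ((Real.sqrt 2 : ℂ))⁻¹ = 2⁻¹ := by
  rw [← mul_inv]; norm_cast
  rw [Real.mul_self_sqrt (by norm_num)]; norm_num

lemma c2_conj : (starRingEnd ℂ) ((Real.sqrt 2 : ℂ))⁻¹ = ((Real.sqrt 2 : ℂ))⁻¹ := by
  rw [map_inv₀, Complex.conj_ofReal]

lemma quad_expand (W : Matrix (Fin 2) (Fin 2) ℂ) (x : Fin 2 → ℂ) :
    star x ⬝ᵥ W *ᵥ x = (starRingEnd ℂ) (x 0) * (W 0 0 * x 0 + W 0 1 * x 1)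
      + (starRingEnd ℂ) (x 1) * (W 1 0 * x 0 + W 1 1 * x 1) := by
  simp [dotProduct, Matrix.mulVec, Fin.sum_univ_two, mul_comm]

section
variable (W : Matrix (Fin 2) (Fin 2) ℂ)

lemma quad_ket0 : star ket0 ⬝ᵥ W *ᵥ ket0 = W 0 0 := by
  rw [quad_expand]; simp [ket0]

lemma quad_ket1 : star ket1 ⬝ᵥ W *ᵥ ket1 = W 1 1 := by
  rw [quad_expand]; simp [ket1]

lemma quad_ketPlus : star ketPlus ⬝ᵥ W *ᵥ ketPlus
    = (W 0 0 + W 0 1 + W 1 0 + W 1 1) * 2⁻¹ := by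
  rw [quad_expand]; simp only [ketPlus, Matrix.cons_val_zero, Matrix.cons_val_one,
    Matrix.head_cons, c2_conj]
  linear_combination (W 0 0 + W 0 1 + W 1 0 + W 1 1) * c2_mul

lemma quad_ketMinus : star ketMinus ⬝ᵥ W *ᵥ ketMinus
    = (W 0 0 - W 0 1 - W 1 0 + W 1 1) * 2⁻¹ := by
  rw [quad_expand]; simp only [ketMinus, Matrix.cons_val_zero, Matrix.cons_val_one,
    Matrix.head_cons, map_neg, c2_conj]
  linear_combination (W 0 0 - W 0 1 - W 1 0 + W 1 1) * c2_mul

lemma quad_ketPlusI : star ketPlusI ⬝ᵥ W *ᵥ ketPlusI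
    = (W 0 0 + Complex.I * W 0 1 - Complex.I * W 1 0 + W 1 1) * 2⁻¹ := by
  rw [quad_expand]; simp only [ketPlusI, Matrix.cons_val_zero, Matrix.cons_val_one,
    Matrix.head_cons, _root_.map_mul, c2_conj, Complex.conj_I]
  linear_combination (W 0 0 + Complex.I * W 0 1 - Complex.I * W 1 0
    + (1:ℂ) * W 1 1) * c2_mul - ((Real.sqrt 2 : ℂ))⁻¹^2 * W 1 1 * Complex.I_sq

lemma quad_ketMinusI : star ketMinusI ⬝ᵥ W *ᵥ ketMinusI
    = (W 0 0 - Complex.I * W 0 1 + Complex.I * W 1 0 + W 1 1) * 2⁻¹ := by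
  rw [quad_expand]; simp only [ketMinusI, Matrix.cons_val_zero, Matrix.cons_val_one,
    Matrix.head_cons, map_neg, _root_.map_mul, c2_conj, Complex.conj_I]
  linear_combination (W 0 0 - Complex.I * W 0 1 + Complex.I * W 1 0
    + (1:ℂ) * W 1 1) * c2_mul - ((Real.sqrt 2 : ℂ))⁻¹^2 * W 1 1 * Complex.I_sq

end

lemma psd_det_re (M : Matrix (Fin 2) (Fin 2) ℂ) (hM : M.PosSemidef) : 0 ≤ M.det.re := by
  rw [hM.1.det_eq_prod_eigenvalues]
  norm_cast
  rw [← RCLike.re_to_complex, RCLike.ofReal_re]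
  exact Finset.prod_nonneg fun i _ => hM.eigenvalues_nonneg i

lemma herm_offdiag {M : Matrix (Fin 2) (Fin 2) ℂ} (h : M.IsHermitian) :
    M 1 0 = (starRingEnd ℂ) (M 0 1) := by
  conv_lhs => rw [← h]
  simp [Matrix.conjTranspose_apply]

lemma herm_diag_im {M : Matrix (Fin 2) (Fin 2) ℂ} (h : M.IsHermitian) (i : Fin 2) :
    (M i i).im = 0 := by
  have : (starRingEnd ℂ) (M i i) = M i i := by
    conv_rhs => rw [← h]
    simp [Matrix.conjTranspose_apply]
  exact Complex.conj_eq_iff_im.mp this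

lemma det_re_fin_two {M : Matrix (Fin 2) (Fin 2) ℂ} (h : M.IsHermitian) :
    M.det.re = (M 0 0).re * (M 1 1).re - ((M 0 1).re^2 + (M 0 1).im^2) := by
  rw [Matrix.det_fin_two, herm_offdiag h]
  have h0 := herm_diag_im h 0
  have h1 := herm_diag_im h 1
  simp [Complex.sub_re, Complex.mul_re, Complex.conj_re, Complex.conj_im, h0, h1]
  ring

set_option maxHeartbeats 1000000

lemma cauchy3 (c1 c2 c3 u1 u2 u3 : ℝ) :
    (c1*u1 + c2*u2 + c3*u3)^2 ≤ (c1^2+c2^2+c3^2)*(u1^2+u2^2+u3^2) := by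
  nlinarith [sq_nonneg (c1*u2 - c2*u1), sq_nonneg (c1*u3 - c3*u1), sq_nonneg (c2*u3 - c3*u2)]

lemma sq_mono (x y : ℝ) (hx : 0 ≤ x) (hy : 0 ≤ y) (h : x^2 ≤ y^2) : x ≤ y := by
  have := Real.sqrt_le_sqrt h
  rwa [Real.sqrt_sq hx, Real.sqrt_sq hy] at this

lemma small_coord (s c u : ℝ) (hc : c ≤ s - 1) (hu : 0 ≤ u) (hs : s^2 = 2) (hs1 : 1 ≤ s) :
    (1+s)*(c*u) ≤ u := by
  have hone : (1+s)*(s-1) = 1 := by linear_combination hs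
  have h1 : (1+s)*c ≤ 1 := by
    have := mul_le_mul_of_nonneg_left hc (show (0:ℝ) ≤ 1+s by linarith)
    linarith
  calc (1+s)*(c*u) = ((1+s)*c)*u := by ring
    _ ≤ 1*u := mul_le_mul_of_nonneg_right h1 hu
    _ = u := one_mul u

lemma core2 (s a c1 c2 c3 u1 u2 u3 : ℝ)
    (hs : s^2 = 2) (hs1 : 1 ≤ s)
    (hc1 : 0 ≤ c1) (hc2 : 0 ≤ c2) (hc3 : 0 ≤ c3)
    (hu1 : 0 ≤ u1) (hu2 : 0 ≤ u2) (hu3 : 0 ≤ u3)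
    (hb1 : a + c1 ≤ 1) (hb2 : a + c2 ≤ 1) (hb3 : a + c3 ≤ 1)
    (hC : c1^2 + c2^2 + c3^2 ≤ a^2) (ha : 0 ≤ a)
    (hU : u1^2 + u2^2 + u3^2 ≤ 1)
    (hL : 1 ≤ u1 + u2 + u3) :
    (1+s)*(a + (c1*u1 + c2*u2 + c3*u3)) ≤ (u1+u2+u3) + s := by
  have hs0 : (0:ℝ) ≤ 1 + s := by linarith
  have hone : (1+s)*(s-1) = 1 := by linear_combination hs
  have hu1' : u1 ≤ 1 := by nlinarith [sq_nonneg u2, sq_nonneg u3]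
  have hu2' : u2 ≤ 1 := by nlinarith [sq_nonneg u1, sq_nonneg u3]
  have hu3' : u3 ≤ 1 := by nlinarith [sq_nonneg u1, sq_nonneg u2]
  set K := c1*u1 + c2*u2 + c3*u3 with hKdef
  have hK0 : 0 ≤ K := by positivity
  rcases le_or_gt a (1/2) with haA | haA
  · -- Cauchy-Schwarz: K ≤ a
    have h1 : K^2 ≤ (c1^2+c2^2+c3^2)*(u1^2+u2^2+u3^2) :=
      cauchy3 c1 c2 c3 u1 u2 u3
    have h2 : (c1^2+c2^2+c3^2)*(u1^2+u2^2+u3^2) ≤ a^2 := by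
      calc (c1^2+c2^2+c3^2)*(u1^2+u2^2+u3^2) ≤ a^2 * 1 :=
        mul_le_mul hC hU (by positivity) (sq_nonneg a)
        _ = a^2 := mul_one _
    have hKa : K ≤ a := sq_mono K a hK0 ha (le_trans h1 h2)
    have h3 : a + K ≤ 1 := by linarith
    have h4 : (1+s)*(a+K) ≤ (1+s)*1 := mul_le_mul_of_nonneg_left h3 hs0
    linarith
  rcases le_or_gt (2 - s) a with haB | haB
  · -- K ≤ (1-a) L
    have hK : K ≤ (1-a)*(u1+u2+u3) := by
      have e1 : c1*u1 ≤ (1-a)*u1 := mul_le_mul_of_nonneg_right (by linarith) hu1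
      have e2 : c2*u2 ≤ (1-a)*u2 := mul_le_mul_of_nonneg_right (by linarith) hu2
      have e3 : c3*u3 ≤ (1-a)*u3 := mul_le_mul_of_nonneg_right (by linarith) hu3
      calc K ≤ (1-a)*u1 + (1-a)*u2 + (1-a)*u3 := by linarith
        _ = (1-a)*(u1+u2+u3) := by ring
    have ht : (1+s)*(1-a) ≤ 1 := by
      have := mul_le_mul_of_nonneg_left (show 1-a ≤ s-1 by linarith) hs0
      linarith
    have hprod : (1 - (1+s)*(1-a))*(u1+u2+u3-1) ≥ 0 :=
      mul_nonneg (by linarith) (by linarith)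
    have hK' : (1+s)*K ≤ ((1+s)*(1-a))*(u1+u2+u3) := by
      have := mul_le_mul_of_nonneg_left hK hs0
      calc (1+s)*K ≤ (1+s)*((1-a)*(u1+u2+u3)) := this
        _ = ((1+s)*(1-a))*(u1+u2+u3) := by ring
    have hid : (1+s)*a + (1+s)*(1-a) = 1+s := by ring
    have hexp : (1+s)*(a+K) = (1+s)*a + (1+s)*K := by ring
    have hprod' : ((1+s)*(1-a))*(u1+u2+u3) ≤ (u1+u2+u3) - 1 + (1+s)*(1-a) := by
      nlinarith [hprod]
    linarith [hexp, hK', hprod', hid]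
  · -- middle case: at most one c_i exceeds s-1
    have key : ∀ ci ui : ℝ, 0 ≤ ui → ui ≤ 1 → ci ≤ 1 - a → s - 1 < ci →
        (1+s)*(ci*ui) ≤ ui + ((1+s)*(1-a) - 1) := by
      intro ci ui h0 h1 hci h
      have p1 : 0 ≤ (1+s)*ci - 1 := by
        have := mul_le_mul_of_nonneg_left h.le hs0
        linarith
      have p2 : ui * ((1+s)*ci - 1) ≤ (1+s)*ci - 1 := mul_le_of_le_one_left p1 h1
      have p3 : (1+s)*ci ≤ (1+s)*(1-a) := mul_le_mul_of_nonneg_left hci hs0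
      have hexp : (1+s)*(ci*ui) = ui*((1+s)*ci - 1) + ui := by ring
      linarith
    have htwo : ∀ ci cj : ℝ, 0 ≤ ci → 0 ≤ cj → ci^2 + cj^2 ≤ a^2 →
        s-1 < ci → s-1 < cj → False := by
      intro ci cj h1 h2 hsum hI hJ
      have hsm : (0:ℝ) ≤ s - 1 := by linarith
      have e1 : (s-1)^2 < ci^2 := by
        have := pow_lt_pow_left₀ hI hsm (by norm_num : 2 ≠ 0)
        linarith
      have e2 : (s-1)^2 < cj^2 := by
        have := pow_lt_pow_left₀ hJ hsm (by norm_num : 2 ≠ 0)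
        linarith
      have e3 : a^2 ≤ (2-s)^2 := by
        have := pow_le_pow_left₀ ha haB.le 2
        linarith
      have hq : (s-1)^2 + (s-1)^2 = (2-s)^2 := by linear_combination hs
      linarith
    have hM : 0 ≤ (1+s)*(1-a) - 1 := by
      have := mul_le_mul_of_nonneg_left (show s-1 ≤ 1-a by linarith) hs0
      linarith
    have hexp : (1+s)*(a+K) = (1+s)*a + ((1+s)*(c1*u1) + (1+s)*(c2*u2) + (1+s)*(c3*u3)) := by
      ring
    have hid : (1+s)*a + ((1+s)*(1-a) - 1) = s := by ring
    rcases le_or_gt c1 (s-1) with h1 | h1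
    · rcases le_or_gt c2 (s-1) with h2 | h2
      · rcases le_or_gt c3 (s-1) with h3 | h3
        · have k1 := small_coord s c1 u1 h1 hu1 hs hs1
          have k2 := small_coord s c2 u2 h2 hu2 hs hs1
          have k3 := small_coord s c3 u3 h3 hu3 hs hs1
          linarith
        · have k1 := small_coord s c1 u1 h1 hu1 hs hs1
          have k2 := small_coord s c2 u2 h2 hu2 hs hs1
          have k3 := key c3 u3 hu3 hu3' (by linarith) h3
          linarith
      · have h3 : c3 ≤ s - 1 := by
          by_contra h
          exact htwo c2 c3 hc2 hc3 (by nlinarith [sq_nonneg c1]) h2 (lt_of_not_ge h)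
        have k1 := small_coord s c1 u1 h1 hu1 hs hs1
        have k2 := key c2 u2 hu2 hu2' (by linarith) h2
        have k3 := small_coord s c3 u3 h3 hu3 hs hs1
        linarith
    · have h2 : c2 ≤ s - 1 := by
        by_contra h
        exact htwo c1 c2 hc1 hc2 (by nlinarith [sq_nonneg c3]) h1 (lt_of_not_ge h)
      have h3 : c3 ≤ s - 1 := by
        by_contra h
        exact htwo c1 c3 hc1 hc3 (by nlinarith [sq_nonneg c2]) h1 (lt_of_not_ge h)
      have k1 := key c1 u1 hu1 hu1' (by linarith) h1
      have k2 := small_coord s c2 u2 h2 hu2 hs hs1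
      have k3 := small_coord s c3 u3 h3 hu3 hs hs1
      linarith

lemma trace_mul_re (W ρ : Matrix (Fin 2) (Fin 2) ℂ) :
    (W * ρ).trace = W 0 0 * ρ 0 0 + W 0 1 * ρ 1 0 + W 1 0 * ρ 0 1 + W 1 1 * ρ 1 1 := by
  simp [Matrix.trace, Matrix.mul_apply, Fin.sum_univ_two, Matrix.diag]
  ring

lemma core3 (s a bx bY bz nx ny nz r : ℝ) (hs : s^2 = 2) (hs1 : 1 ≤ s)
    (hx : a + |bx| ≤ 1) (hy : a + |bY| ≤ 1) (hz : a + |bz| ≤ 1)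
    (hC : bx^2 + bY^2 + bz^2 ≤ a^2) (ha : 0 ≤ a)
    (hU : nx^2 + ny^2 + nz^2 ≤ 1) (hr1 : 1 ≤ r)
    (hrn : |nx| + |ny| + |nz| ≤ r) :
    (1+s) * (a + (bx*nx + bY*ny + bz*nz)) - s ≤ r := by
  have hs0 : (0:ℝ) ≤ 1 + s := by linarith
  have hbn : bx*nx + bY*ny + bz*nz ≤ |bx| * |nx| + |bY| * |ny| + |bz| * |nz| := by
    have e1 := le_abs_self (bx*nx); have e2 := le_abs_self (bY*ny)
    have e3 := le_abs_self (bz*nz)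
    rw [abs_mul] at e1 e2 e3; linarith
  have hCabs : |bx|^2 + |bY|^2 + |bz|^2 ≤ a^2 := by
    rw [sq_abs, sq_abs, sq_abs]; exact hC
  have hUabs : |nx|^2 + |ny|^2 + |nz|^2 ≤ 1 := by
    rw [sq_abs, sq_abs, sq_abs]; exact hU
  rcases le_or_gt (|nx| + |ny| + |nz|) 1 with hL | hL
  · have h1a : 0 ≤ 1 - a := by have := abs_nonneg bx; linarith
    have e1 : |bx| * |nx| ≤ (1-a)* |nx| :=
      mul_le_mul_of_nonneg_right (by linarith) (abs_nonneg nx)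
    have e2 : |bY| * |ny| ≤ (1-a)* |ny| :=
      mul_le_mul_of_nonneg_right (by linarith) (abs_nonneg ny)
    have e3 : |bz| * |nz| ≤ (1-a)* |nz| :=
      mul_le_mul_of_nonneg_right (by linarith) (abs_nonneg nz)
    have e4 : (1-a)*(|nx| + |ny| + |nz|) ≤ (1-a)*1 := mul_le_mul_of_nonneg_left hL h1a
    have e5 : a + (bx*nx + bY*ny + bz*nz) ≤ 1 := by nlinarith [e4]
    have e6 : (1+s)*(a + (bx*nx + bY*ny + bz*nz)) ≤ (1+s)*1 :=
      mul_le_mul_of_nonneg_left e5 hs0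
    linarith
  · have h := core2 s a |bx| |bY| |bz| |nx| |ny| |nz| hs hs1
      (abs_nonneg _) (abs_nonneg _) (abs_nonneg _)
      (abs_nonneg _) (abs_nonneg _) (abs_nonneg _)
      hx hy hz hCabs ha hUabs hL.le
    have e6 : (1+s)*(a + (bx*nx + bY*ny + bz*nz))
        ≤ (1+s)*(a + (|bx| * |nx| + |bY| * |ny| + |bz| * |nz|)) :=
      mul_le_mul_of_nonneg_left (by linarith) hs0
    linarith

lemma witness_bound (ρ W : Matrix (Fin 2) (Fin 2) ℂ) (hρ : ρ.PosSemidef) (htr : ρ.trace = 1)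
    (hW : W.PosSemidef) (hfree : ∀ φ ∈ stab1, (star φ ⬝ᵥ (W *ᵥ φ)).re ≤ 1)
    (r : ℝ) (hr1 : 1 ≤ r)
    (hrn : |2*(ρ 0 1).re| + |(-2)*(ρ 0 1).im| + |(ρ 0 0).re - (ρ 1 1).re| ≤ r) :
    (1 + Real.sqrt 2) * ((W * ρ).trace).re - Real.sqrt 2 ≤ r := by
  have hs : (Real.sqrt 2)^2 = 2 := Real.sq_sqrt (by norm_num)
  have hs1 : 1 ≤ Real.sqrt 2 := by
    rw [show (1:ℝ) = Real.sqrt 1 by simp]; exact Real.sqrt_le_sqrt (by norm_num)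
  -- memberships
  have hm0 : ket0 ∈ stab1 := by simp [stab1]
  have hm1 : ket1 ∈ stab1 := by simp [stab1]
  have hmp : ketPlus ∈ stab1 := by simp [stab1]
  have hmm : ketMinus ∈ stab1 := by simp [stab1]
  have hmpi : ketPlusI ∈ stab1 := by simp [stab1]
  have hmmi : ketMinusI ∈ stab1 := by simp [stab1]
  -- hermitian structure
  have hWh := hW.1
  have hW10 : W 1 0 = (starRingEnd ℂ) (W 0 1) := herm_offdiag hWh
  have hWim0 : (W 0 0).im = 0 := herm_diag_im hWh 0
  have hWim1 : (W 1 1).im = 0 := herm_diag_im hWh 1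
  have hρh := hρ.1
  have hρ10 : ρ 1 0 = (starRingEnd ℂ) (ρ 0 1) := herm_offdiag hρh
  have hρim0 : (ρ 0 0).im = 0 := herm_diag_im hρh 0
  have hρim1 : (ρ 1 1).im = 0 := herm_diag_im hρh 1
  -- trace of ρ
  have htr' : (ρ 0 0).re + (ρ 1 1).re = 1 := by
    have := congrArg Complex.re htr
    rw [Matrix.trace_fin_two] at this
    simpa using this
  -- witness constraints
  have v0 : (W 0 0).re ≤ 1 := by have := hfree ket0 hm0; rwa [quad_ket0] at this
  have v1 : (W 1 1).re ≤ 1 := by have := hfree ket1 hm1; rwa [quad_ket1] at this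
  have h2c : ((2:ℂ)⁻¹) = ((2⁻¹:ℝ):ℂ) := by norm_num
  have vp : ((W 0 0).re + (W 1 1).re)/2 + (W 0 1).re ≤ 1 := by
    have h := hfree ketPlus hmp
    rw [quad_ketPlus, hW10, h2c, mul_comm, Complex.re_ofReal_mul] at h
    simp only [Complex.add_re, Complex.conj_re] at h
    linarith
  have vm : ((W 0 0).re + (W 1 1).re)/2 - (W 0 1).re ≤ 1 := by
    have h := hfree ketMinus hmm
    rw [quad_ketMinus, hW10, h2c, mul_comm, Complex.re_ofReal_mul] at h
    simp only [Complex.sub_re, Complex.add_re, Complex.conj_re] at h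
    linarith
  have vpi : ((W 0 0).re + (W 1 1).re)/2 - (W 0 1).im ≤ 1 := by
    have h := hfree ketPlusI hmpi
    rw [quad_ketPlusI, hW10, h2c, mul_comm, Complex.re_ofReal_mul] at h
    simp only [Complex.add_re, Complex.sub_re, Complex.mul_re, Complex.conj_re,
      Complex.conj_im, Complex.I_re, Complex.I_im] at h
    linarith
  have vmi : ((W 0 0).re + (W 1 1).re)/2 + (W 0 1).im ≤ 1 := by
    have h := hfree ketMinusI hmmi
    rw [quad_ketMinusI, hW10, h2c, mul_comm, Complex.re_ofReal_mul] at h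
    simp only [Complex.add_re, Complex.sub_re, Complex.mul_re, Complex.conj_re,
      Complex.conj_im, Complex.I_re, Complex.I_im] at h
    linarith
  -- psd facts
  have hA : 0 ≤ (W 0 0).re := by
    have h := hW.dotProduct_mulVec_nonneg ket0
    rw [quad_ket0] at h
    exact (Complex.le_def.mp h).1
  have hD : 0 ≤ (W 1 1).re := by
    have h := hW.dotProduct_mulVec_nonneg ket1
    rw [quad_ket1] at h
    exact (Complex.le_def.mp h).1
  have hdetW : 0 ≤ (W 0 0).re * (W 1 1).re - ((W 0 1).re^2 + (W 0 1).im^2) := by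
    have := psd_det_re W hW
    rwa [det_re_fin_two hWh] at this
  have hdetρ : 0 ≤ (ρ 0 0).re * (ρ 1 1).re - ((ρ 0 1).re^2 + (ρ 0 1).im^2) := by
    have := psd_det_re ρ hρ
    rwa [det_re_fin_two hρh] at this
  -- trace product formula
  have hT : ((W * ρ).trace).re = ((W 0 0).re + (W 1 1).re)/2
      + ((W 0 1).re * (2*(ρ 0 1).re) + (-(W 0 1).im) * ((-2)*(ρ 0 1).im)
        + (((W 0 0).re - (W 1 1).re)/2) * ((ρ 0 0).re - (ρ 1 1).re)) := by
    rw [trace_mul_re, hW10, hρ10]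
    simp only [Complex.add_re, Complex.mul_re, Complex.conj_re, Complex.conj_im,
      hWim0, hWim1, hρim0, hρim1]
    linear_combination (((W 0 0).re + (W 1 1).re)/2) * htr'
  -- assemble
  rw [hT]
  apply core3 (Real.sqrt 2) (((W 0 0).re + (W 1 1).re)/2) ((W 0 1).re) (-(W 0 1).im)
    (((W 0 0).re - (W 1 1).re)/2) (2*(ρ 0 1).re) ((-2)*(ρ 0 1).im)
    ((ρ 0 0).re - (ρ 1 1).re) r hs hs1
  · rcases abs_cases ((W 0 1).re) with ⟨h, _⟩ | ⟨h, _⟩ <;> rw [h] <;> linarith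
  · rcases abs_cases (-(W 0 1).im) with ⟨h, _⟩ | ⟨h, _⟩ <;> rw [h] <;> linarith
  · rcases abs_cases (((W 0 0).re - (W 1 1).re)/2) with ⟨h, _⟩ | ⟨h, _⟩ <;> rw [h] <;> linarith
  · nlinarith [hdetW]
  · linarith
  · nlinarith [hdetρ, htr', sq_nonneg ((ρ 0 0).re + (ρ 1 1).re)]
  · exact hr1
  · exact hrn

lemma half_re : ((2:ℂ)⁻¹).re = 1/2 := by norm_num
lemma half_im : ((2:ℂ)⁻¹).im = 0 := by norm_num

-- entry lemmas
lemma dk0 : ∀ i j, (dyadM ket0 ket0) i j = !![1,0;0,0] i j := by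
  intro i j; fin_cases i <;> fin_cases j <;>
    simp [dyadM, Matrix.vecMulVec_apply, ket0]
lemma dk1 : ∀ i j, (dyadM ket1 ket1) i j = !![0,0;0,1] i j := by
  intro i j; fin_cases i <;> fin_cases j <;>
    simp [dyadM, Matrix.vecMulVec_apply, ket1]
lemma dkp : ∀ i j, (dyadM ketPlus ketPlus) i j = !![2⁻¹,2⁻¹;2⁻¹,2⁻¹] i j := by
  intro i j; fin_cases i <;> fin_cases j <;>
    (simp [dyadM, Matrix.vecMulVec_apply, ketPlus, c2_conj]; linear_combination c2_mul)
lemma dkm : ∀ i j, (dyadM ketMinus ketMinus) i j = !![2⁻¹,-2⁻¹;-2⁻¹,2⁻¹] i j := by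
  intro i j
  fin_cases i <;> fin_cases j
  · simp [dyadM, Matrix.vecMulVec_apply, ketMinus, c2_conj]; linear_combination c2_mul
  · simp [dyadM, Matrix.vecMulVec_apply, ketMinus, c2_conj]; linear_combination c2_mul
  · simp [dyadM, Matrix.vecMulVec_apply, ketMinus, c2_conj]; linear_combination c2_mul
  · simp [dyadM, Matrix.vecMulVec_apply, ketMinus, c2_conj]; linear_combination c2_mul

lemma dkpi : ∀ i j, (dyadM ketPlusI ketPlusI) i j
    = !![2⁻¹, -Complex.I * 2⁻¹; Complex.I * 2⁻¹, 2⁻¹] i j := by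
  intro i j
  fin_cases i <;> fin_cases j
  · simp [dyadM, Matrix.vecMulVec_apply, ketPlusI, c2_conj, Complex.conj_I]
    linear_combination c2_mul
  · simp [dyadM, Matrix.vecMulVec_apply, ketPlusI, c2_conj, Complex.conj_I]
    linear_combination Complex.I * c2_mul
  · simp [dyadM, Matrix.vecMulVec_apply, ketPlusI, c2_conj, Complex.conj_I]
    linear_combination Complex.I * c2_mul
  · simp [dyadM, Matrix.vecMulVec_apply, ketPlusI, c2_conj, Complex.conj_I]
    linear_combination (-Complex.I^2) * c2_mul - 2⁻¹ * Complex.I_sq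

lemma dkmi : ∀ i j, (dyadM ketMinusI ketMinusI) i j
    = !![2⁻¹, Complex.I * 2⁻¹; -Complex.I * 2⁻¹, 2⁻¹] i j := by
  intro i j
  fin_cases i <;> fin_cases j
  · simp [dyadM, Matrix.vecMulVec_apply, ketMinusI, c2_conj, Complex.conj_I]
    linear_combination c2_mul
  · simp [dyadM, Matrix.vecMulVec_apply, ketMinusI, c2_conj, Complex.conj_I]
    linear_combination Complex.I * c2_mul
  · simp [dyadM, Matrix.vecMulVec_apply, ketMinusI, c2_conj, Complex.conj_I]
    linear_combination Complex.I * c2_mul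
  · simp [dyadM, Matrix.vecMulVec_apply, ketMinusI, c2_conj, Complex.conj_I]
    linear_combination (-Complex.I^2) * c2_mul - 2⁻¹ * Complex.I_sq

lemma stab_vals {φ : Fin 2 → ℂ} (h : φ ∈ stab1) :
    (dyadM φ φ).trace = 1 ∧
    |2 * ((dyadM φ φ) 0 1).re| + |(-2) * ((dyadM φ φ) 0 1).im|
      + |((dyadM φ φ) 0 0).re - ((dyadM φ φ) 1 1).re| = 1 := by
  simp only [stab1, Set.mem_insert_iff, Set.mem_singleton_iff] at h
  obtain rfl | rfl | rfl | rfl | rfl | rfl := h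
  · rw [Matrix.trace_fin_two, dk0 0 0, dk0 1 1, dk0 0 1]
    norm_num
  · rw [Matrix.trace_fin_two, dk1 0 0, dk1 1 1, dk1 0 1]
    norm_num
  · rw [Matrix.trace_fin_two, dkp 0 0, dkp 1 1, dkp 0 1]
    norm_num
  · rw [Matrix.trace_fin_two, dkm 0 0, dkm 1 1, dkm 0 1]
    norm_num
  · rw [Matrix.trace_fin_two, dkpi 0 0, dkpi 1 1, dkpi 0 1]
    constructor
    · norm_num
    · norm_num [Complex.mul_re, Complex.mul_im]
  · rw [Matrix.trace_fin_two, dkmi 0 0, dkmi 1 1, dkmi 0 1]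
    constructor
    · norm_num
    · norm_num [Complex.mul_re, Complex.mul_im]

lemma decomp_bounds (ρ : Matrix (Fin 2) (Fin 2) ℂ) (htr : ρ.trace = 1)
    (m : ℕ) (q : Fin m → ℝ) (φ : Fin m → (Fin 2 → ℂ)) (hst : ∀ j, φ j ∈ stab1)
    (hdec : ρ = ∑ j, (q j : ℂ) • dyadM (φ j) (φ j)) :
    1 ≤ ∑ j, |q j| ∧
    |2 * (ρ 0 1).re| + |(-2) * (ρ 0 1).im| + |(ρ 0 0).re - (ρ 1 1).re| ≤ ∑ j, |q j| := by
  have hsum : ∑ j, q j = 1 := by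
    have h := htr
    rw [hdec, Matrix.trace_sum] at h
    have h2 : ∀ j : Fin m, ((q j : ℂ) • dyadM (φ j) (φ j)).trace = (q j : ℂ) := by
      intro j
      rw [Matrix.trace_smul, (stab_vals (hst j)).1]
      simp
    rw [Finset.sum_congr rfl (fun j _ => h2 j), ← Complex.ofReal_sum] at h
    exact_mod_cast h
  have hent : ∀ i k, ρ i k = ∑ j, (q j : ℂ) * (dyadM (φ j) (φ j)) i k := by
    intro i k
    rw [hdec]
    simp [Matrix.sum_apply]
  have hre : ∀ i k, (ρ i k).re = ∑ j, q j * ((dyadM (φ j) (φ j)) i k).re := by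
    intro i k
    rw [hent i k, Complex.re_sum]
    exact Finset.sum_congr rfl fun j _ => Complex.re_ofReal_mul _ _
  have him : ∀ i k, (ρ i k).im = ∑ j, q j * ((dyadM (φ j) (φ j)) i k).im := by
    intro i k
    rw [hent i k, Complex.im_sum]
    exact Finset.sum_congr rfl fun j _ => Complex.im_ofReal_mul _ _
  constructor
  · calc (1:ℝ) = ∑ j, q j := hsum.symm
      _ ≤ ∑ j, |q j| := Finset.sum_le_sum fun j _ => le_abs_self _
  · have ex : 2 * (ρ 0 1).re = ∑ j, q j * (2 * ((dyadM (φ j) (φ j)) 0 1).re) := by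
      rw [hre 0 1, Finset.mul_sum]
      exact Finset.sum_congr rfl fun j _ => by ring
    have ey : (-2) * (ρ 0 1).im = ∑ j, q j * ((-2) * ((dyadM (φ j) (φ j)) 0 1).im) := by
      rw [him 0 1, Finset.mul_sum]
      exact Finset.sum_congr rfl fun j _ => by ring
    have ez : (ρ 0 0).re - (ρ 1 1).re
        = ∑ j, q j * (((dyadM (φ j) (φ j)) 0 0).re - ((dyadM (φ j) (φ j)) 1 1).re) := by
      rw [hre 0 0, hre 1 1, ← Finset.sum_sub_distrib]
      exact Finset.sum_congr rfl fun j _ => by ring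
    rw [ex, ey, ez]
    calc |∑ j, q j * (2 * ((dyadM (φ j) (φ j)) 0 1).re)|
          + |∑ j, q j * ((-2) * ((dyadM (φ j) (φ j)) 0 1).im)|
          + |∑ j, q j * (((dyadM (φ j) (φ j)) 0 0).re - ((dyadM (φ j) (φ j)) 1 1).re)|
        ≤ (∑ j, |q j * (2 * ((dyadM (φ j) (φ j)) 0 1).re)|)
          + (∑ j, |q j * ((-2) * ((dyadM (φ j) (φ j)) 0 1).im)|)
          + (∑ j, |q j * (((dyadM (φ j) (φ j)) 0 0).re - ((dyadM (φ j) (φ j)) 1 1).re)|) := by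
          gcongr <;> exact Finset.abs_sum_le_sum_abs _ _
      _ = ∑ j, (|q j * (2 * ((dyadM (φ j) (φ j)) 0 1).re)|
          + |q j * ((-2) * ((dyadM (φ j) (φ j)) 0 1).im)|
          + |q j * (((dyadM (φ j) (φ j)) 0 0).re - ((dyadM (φ j) (φ j)) 1 1).re)|) := by
          rw [Finset.sum_add_distrib, Finset.sum_add_distrib]
      _ = ∑ j, |q j| := by
          refine Finset.sum_congr rfl fun j _ => ?_
          rw [abs_mul (q j), abs_mul (q j), abs_mul (q j), ← mul_add, ← mul_add, (stab_vals (hst j)).2, mul_one]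

lemma herm_offdiag' {M : Matrix (Fin 2) (Fin 2) ℂ} (h : M.IsHermitian) :
    M 1 0 = (starRingEnd ℂ) (M 0 1) := by
  conv_lhs => rw [← h]
  simp [Matrix.conjTranspose_apply]

lemma herm_diag_im' {M : Matrix (Fin 2) (Fin 2) ℂ} (h : M.IsHermitian) (i : Fin 2) :
    (M i i).im = 0 := by
  have : (starRingEnd ℂ) (M i i) = M i i := by
    conv_rhs => rw [← h]
    simp [Matrix.conjTranspose_apply]
  exact Complex.conj_eq_iff_im.mp this

lemma decomp_exists (ρ : Matrix (Fin 2) (Fin 2) ℂ) (hρ : ρ.PosSemidef) :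
    ∃ (m : ℕ) (q : Fin m → ℝ) (φ : Fin m → (Fin 2 → ℂ)),
      (∀ j, φ j ∈ stab1) ∧ ρ = ∑ j, (q j : ℂ) • dyadM (φ j) (φ j) := by
  have h10 : ρ 1 0 = (starRingEnd ℂ) (ρ 0 1) := herm_offdiag' hρ.1
  have hi0 : (ρ 0 0).im = 0 := herm_diag_im' hρ.1 0
  have hi1 : (ρ 1 1).im = 0 := herm_diag_im' hρ.1 1
  refine ⟨6, ![(ρ 0 0).re, (ρ 1 1).re, (ρ 0 1).re, -(ρ 0 1).re, -(ρ 0 1).im, (ρ 0 1).im],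
    ![ket0, ket1, ketPlus, ketMinus, ketPlusI, ketMinusI], fun j => by fin_cases j <;> simp only [stab1, Matrix.cons_val_zero, Matrix.cons_val_succ, Set.mem_insert_iff, Set.mem_singleton_iff] <;> tauto, ?_⟩
  ext i k
  rw [Matrix.sum_apply]
  fin_cases i <;> fin_cases k <;>
    simp only [Fin.sum_univ_succ, Fin.sum_univ_zero, Matrix.smul_apply, Matrix.cons_val_zero,
      Matrix.cons_val_succ, dk0, dk1, dkp, dkm, dkpi, dkmi, smul_eq_mul, add_zero] <;>
    apply Complex.ext <;>
    simp [Complex.add_re, Complex.add_im, Complex.mul_re, Complex.mul_im,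
      Complex.I_re, Complex.I_im, hi0, hi1, h10, Complex.conj_re, Complex.conj_im] <;>
    ring_nf <;> norm_num

/-- **Single-qubit robustness bound.**  For any single-qubit state `ρ`,
`ℛ(ρ) ≥ (1+√2)Λ⁺(ρ) − √2`, with the monotones taken with respect to the six
single-qubit stabilizer states. -/
theorem single_qubit_robustness_bound
    (ρ : Matrix (Fin 2) (Fin 2) ℂ) (hρ : ρ.PosSemidef) (htr : ρ.trace = 1) :
    (1 + Real.sqrt 2) * genRob stab1 ρ - Real.sqrt 2 ≤ robustness stab1 ρ := by
  have hs1 : 1 ≤ Real.sqrt 2 := by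
    rw [show (1:ℝ) = Real.sqrt 1 by simp]
    exact Real.sqrt_le_sqrt (by norm_num)
  have hpos : (0:ℝ) < 1 + Real.sqrt 2 := by linarith
  obtain ⟨m0, q0, φ0, hst0, hdec0⟩ := decomp_exists ρ hρ
  unfold robustness
  refine le_csInf ⟨∑ j : Fin m0, |q0 j|, ⟨m0, q0, φ0, hst0, hdec0, rfl⟩⟩ ?_
  rintro r ⟨m, q, φ, hst, hdec, rfl⟩
  obtain ⟨hr1, hrn⟩ := decomp_bounds ρ htr m q φ hst hdec
  have hsup : genRob stab1 ρ ≤ ((∑ j, |q j|) + Real.sqrt 2) / (1 + Real.sqrt 2) := by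
    unfold genRob
    apply Real.sSup_le
    · rintro x ⟨W, hW, hfree, rfl⟩
      rw [le_div_iff₀ hpos]
      have h := witness_bound ρ W hρ htr hW hfree _ hr1 hrn
      linarith
    · apply div_nonneg _ (le_of_lt hpos)
      linarith
  have h2 := mul_le_mul_of_nonneg_left hsup (le_of_lt hpos)
  have h3 : (1 + Real.sqrt 2) * (((∑ j, |q j|) + Real.sqrt 2) / (1 + Real.sqrt 2))
      = (∑ j, |q j|) + Real.sqrt 2 := by
    field_simp
  linarith
end
end

section
/- For any single-qubit non-stabilizer state ρ, ℛ(ρ) = |⟨X⟩| + |⟨Y⟩| + |⟨Z⟩| = 2𝒟(ρ) − 1, where 𝒟(ρ) = (1 + |⟨X⟩| + |⟨Y⟩| + |⟨Z⟩|)/2 is the stab-norm. -/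
open Matrix
open scoped ComplexOrder

noncomputable section

lemma sqrt2_mul : ((Real.sqrt 2:ℝ):ℂ)⁻¹ * ((Real.sqrt 2:ℝ):ℂ)⁻¹ = 1/2 := by
  rw [← mul_inv]
  norm_cast
  rw [Real.mul_self_sqrt (by norm_num)]
  norm_num

lemma stab_expv (φ : Fin 2 → ℂ) (hφ : φ ∈ stab1) :
    |expv (dyadM φ φ) PauliX| + |expv (dyadM φ φ) PauliY| + |expv (dyadM φ φ) PauliZ| = 1 := by
  rcases hφ with h|h|h|h|h|h <;> subst h <;>
    simp [expv, dyadM, Matrix.vecMulVec, Matrix.trace_fin_two, Matrix.mul_apply,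
      Fin.sum_univ_two, PauliX, PauliY, PauliZ, ket0, ket1, ketPlus, ketMinus,
      ketPlusI, ketMinusI, Complex.ext_iff, sqrt2_mul] <;>
    norm_num [div_mul_div_comm, Real.mul_self_sqrt]

lemma expv_sum (M : Matrix (Fin 2) (Fin 2) ℂ) (m : ℕ) (q : Fin m → ℝ)
    (φ : Fin m → (Fin 2 → ℂ)) :
    expv (∑ j, (q j : ℂ) • dyadM (φ j) (φ j)) M
      = ∑ j, q j * expv (dyadM (φ j) (φ j)) M := by
  simp [expv, Finset.sum_mul, Matrix.smul_mul, Matrix.trace_sum, Matrix.trace_smul,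
    Complex.re_sum, Complex.re_ofReal_mul, smul_eq_mul]

lemma rho_entries (ρ : Matrix (Fin 2) (Fin 2) ℂ) (hρ : ρ.PosSemidef) (htr : ρ.trace = 1) :
    ρ = !![((1 + expv ρ PauliZ : ℝ):ℂ)/2,
           (((expv ρ PauliX : ℝ):ℂ) - ((expv ρ PauliY : ℝ):ℂ)*Complex.I)/2;
           (((expv ρ PauliX : ℝ):ℂ) + ((expv ρ PauliY : ℝ):ℂ)*Complex.I)/2,
           ((1 - expv ρ PauliZ : ℝ):ℂ)/2] := by
  have herm := hρ.1
  have h10 : ρ 1 0 = star (ρ 0 1) := by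
    conv_lhs => rw [← herm]
    simp [Matrix.conjTranspose_apply]
  have h00 : (ρ 0 0).im = 0 := by
    have := congrFun (congrFun herm 0) 0
    simp [Matrix.conjTranspose_apply, Complex.ext_iff] at this
    linarith [this]
  have h11 : (ρ 1 1).im = 0 := by
    have := congrFun (congrFun herm 1) 1
    simp [Matrix.conjTranspose_apply, Complex.ext_iff] at this
    linarith [this]
  have htr' : ρ 0 0 + ρ 1 1 = 1 := by rwa [Matrix.trace_fin_two] at htr
  have hX : expv ρ PauliX = 2 * (ρ 0 1).re := by
    simp [expv, PauliX, Matrix.trace_fin_two, Matrix.mul_apply, Fin.sum_univ_two, h10]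
    ring
  have hY : expv ρ PauliY = -2 * (ρ 0 1).im := by
    simp [expv, PauliY, Matrix.trace_fin_two, Matrix.mul_apply, Fin.sum_univ_two, h10,
      Complex.mul_re]
    ring
  have hZ : expv ρ PauliZ = (ρ 0 0).re - (ρ 1 1).re := by
    simp [expv, PauliZ, Matrix.trace_fin_two, Matrix.mul_apply, Fin.sum_univ_two]
    ring
  have htrre : (ρ 0 0).re + (ρ 1 1).re = 1 := by
    have := congrArg Complex.re htr'
    simpa using this
  ext i j
  fin_cases i <;> fin_cases j <;>
    simp [Complex.ext_iff, hX, hY, hZ, h10, h00, h11, Complex.div_re, Complex.div_im,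
      Complex.normSq] <;> linarith

lemma dyad_ket0 : dyadM ket0 ket0 = !![1,0;0,0] := by
  ext i j; fin_cases i <;> fin_cases j <;> simp [dyadM, Matrix.vecMulVec, ket0]
lemma dyad_ket1 : dyadM ket1 ket1 = !![0,0;0,1] := by
  ext i j; fin_cases i <;> fin_cases j <;> simp [dyadM, Matrix.vecMulVec, ket1]
lemma dyad_ketPlus : dyadM ketPlus ketPlus = !![1/2,1/2;1/2,1/2] := by
  ext i j; fin_cases i <;> fin_cases j <;>
    simp [dyadM, Matrix.vecMulVec, ketPlus, sqrt2_mul]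
lemma dyad_ketMinus : dyadM ketMinus ketMinus = !![1/2,-(1/2);-(1/2),1/2] := by
  ext i j; fin_cases i <;> fin_cases j <;>
    simp [dyadM, Matrix.vecMulVec, ketMinus, sqrt2_mul]
lemma dyad_ketPlusI : dyadM ketPlusI ketPlusI = !![1/2, -(Complex.I/2); Complex.I/2, 1/2] := by
  ext i j; fin_cases i <;> fin_cases j <;>
    simp [dyadM, Matrix.vecMulVec, ketPlusI, Complex.ext_iff, sqrt2_mul] <;>
    norm_num [div_mul_div_comm, Real.mul_self_sqrt]
lemma dyad_ketMinusI : dyadM ketMinusI ketMinusI = !![1/2, Complex.I/2; -(Complex.I/2), 1/2] := by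
  ext i j; fin_cases i <;> fin_cases j <;>
    simp [dyadM, Matrix.vecMulVec, ketMinusI, Complex.ext_iff, sqrt2_mul] <;>
    norm_num [div_mul_div_comm, Real.mul_self_sqrt]

lemma decomp_eq (x y z s : ℝ) (hs : s = |x| + |y| + |z|) (hs0 : 0 < s) :
    (!![((1 + z : ℝ):ℂ)/2, (((x : ℝ):ℂ) - ((y : ℝ):ℂ)*Complex.I)/2;
       (((x : ℝ):ℂ) + ((y : ℝ):ℂ)*Complex.I)/2, ((1 - z : ℝ):ℂ)/2]
      : Matrix (Fin 2) (Fin 2) ℂ)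
    = ∑ j, ((![x/2 + |x|/(2*s), -x/2 + |x|/(2*s), y/2 + |y|/(2*s), -y/2 + |y|/(2*s),
      z/2 + |z|/(2*s), -z/2 + |z|/(2*s)] j : ℝ) : ℂ) •
      dyadM (![ketPlus, ketMinus, ketPlusI, ketMinusI, ket0, ket1] j)
            (![ketPlus, ketMinus, ketPlusI, ketMinusI, ket0, ket1] j) := by
  have hsne : s ≠ 0 := ne_of_gt hs0
  simp only [Fin.sum_univ_succ, Fin.sum_univ_zero, Matrix.cons_val_zero,
    Matrix.cons_val_succ, dyad_ket0, dyad_ket1, dyad_ketPlus, dyad_ketMinus,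
    dyad_ketPlusI, dyad_ketMinusI]
  ext i j
  fin_cases i <;> fin_cases j <;>
    · simp [Complex.ext_iff, Complex.div_re, Complex.div_im, Complex.normSq]
      field_simp
      try rw [show |x| = s - |y| - |z| from by linarith]
      try ring_nf
      try simp

lemma abs_split (s : ℝ) (hs1 : 1 ≤ s) (w : ℝ) :
    |w/2 + |w|/(2*s)| + |-w/2 + |w|/(2*s)| = |w| := by
  have hs0 : (0:ℝ) < s := by linarith
  have h2 : |w|/(2*s) ≤ |w|/2 := by
    apply div_le_div_of_nonneg_left (abs_nonneg w) (by norm_num) (by linarith)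
  rcases le_or_gt 0 w with hw|hw
  · rw [abs_of_nonneg hw] at h2 ⊢
    rw [abs_of_nonneg (by positivity), abs_of_nonpos (by linarith)]
    ring
  · rw [abs_of_neg hw] at h2 ⊢
    have hq : (0:ℝ) ≤ -w/(2*s) := div_nonneg (by linarith) (by linarith)
    rw [abs_of_nonpos (by linarith), abs_of_nonneg (by linarith)]
    ring

/-- **Exact robustness of a single-qubit non-stabilizer state.**
For any single-qubit state `ρ` with `|⟨X⟩| + |⟨Y⟩| + |⟨Z⟩| > 1` (a non-stabilizer
state), the robustness of magic satisfies
`ℛ(ρ) = |⟨X⟩| + |⟨Y⟩| + |⟨Z⟩| = 2𝒟(ρ) − 1`, where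
`𝒟(ρ) = (1 + |⟨X⟩| + |⟨Y⟩| + |⟨Z⟩|)/2` is the stab-norm. -/
theorem single_qubit_robustness_eq
    (ρ : Matrix (Fin 2) (Fin 2) ℂ) (hρ : ρ.PosSemidef) (htr : ρ.trace = 1)
    (hnonstab : 1 < |expv ρ PauliX| + |expv ρ PauliY| + |expv ρ PauliZ|) :
    robustness stab1 ρ = |expv ρ PauliX| + |expv ρ PauliY| + |expv ρ PauliZ| ∧
    robustness stab1 ρ =
      2 * ((1 + |expv ρ PauliX| + |expv ρ PauliY| + |expv ρ PauliZ|) / 2) - 1 := by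
  classical
  set x := expv ρ PauliX with hxdef
  set y := expv ρ PauliY with hydef
  set z := expv ρ PauliZ with hzdef
  set s := |x| + |y| + |z| with hsdef
  have hs1 : 1 < s := hnonstab
  have hs0 : (0:ℝ) < s := by linarith
  set T : Set ℝ := {r : ℝ | ∃ (m : ℕ) (q : Fin m → ℝ) (φ : Fin m → (Fin 2 → ℂ)),
    (∀ j, φ j ∈ stab1) ∧ ρ = ∑ j, (q j : ℂ) • dyadM (φ j) (φ j) ∧ r = ∑ j, |q j|} with hT
  have hlb : ∀ r ∈ T, s ≤ r := by
    rintro r ⟨m, q, φ, hφ, hrho, hr⟩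
    have hXe : x = ∑ j, q j * expv (dyadM (φ j) (φ j)) PauliX := by
      rw [hxdef, hrho, expv_sum]
    have hYe : y = ∑ j, q j * expv (dyadM (φ j) (φ j)) PauliY := by
      rw [hydef, hrho, expv_sum]
    have hZe : z = ∑ j, q j * expv (dyadM (φ j) (φ j)) PauliZ := by
      rw [hzdef, hrho, expv_sum]
    have hXb : |x| ≤ ∑ j, |q j| * |expv (dyadM (φ j) (φ j)) PauliX| := by
      rw [hXe]
      refine le_trans (Finset.abs_sum_le_sum_abs _ _) ?_
      simp [abs_mul]
    have hYb : |y| ≤ ∑ j, |q j| * |expv (dyadM (φ j) (φ j)) PauliY| := by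
      rw [hYe]
      refine le_trans (Finset.abs_sum_le_sum_abs _ _) ?_
      simp [abs_mul]
    have hZb : |z| ≤ ∑ j, |q j| * |expv (dyadM (φ j) (φ j)) PauliZ| := by
      rw [hZe]
      refine le_trans (Finset.abs_sum_le_sum_abs _ _) ?_
      simp [abs_mul]
    have key : (∑ j, |q j| * |expv (dyadM (φ j) (φ j)) PauliX|)
        + (∑ j, |q j| * |expv (dyadM (φ j) (φ j)) PauliY|)
        + (∑ j, |q j| * |expv (dyadM (φ j) (φ j)) PauliZ|) = ∑ j, |q j| := by
      rw [← Finset.sum_add_distrib, ← Finset.sum_add_distrib]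
      refine Finset.sum_congr rfl fun j _ => ?_
      rw [← mul_add, ← mul_add, stab_expv _ (hφ j), mul_one]
    rw [hr]
    calc s = |x| + |y| + |z| := hsdef
    _ ≤ _ := by linarith
    _ = ∑ j, |q j| := key
  have hmem : s ∈ T := by
    refine ⟨6, ![x/2 + |x|/(2*s), -x/2 + |x|/(2*s), y/2 + |y|/(2*s), -y/2 + |y|/(2*s),
      z/2 + |z|/(2*s), -z/2 + |z|/(2*s)],
      ![ketPlus, ketMinus, ketPlusI, ketMinusI, ket0, ket1], ?_, ?_, ?_⟩
    · intro j
      fin_cases j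
      · exact Or.inr (Or.inr (Or.inl rfl))
      · exact Or.inr (Or.inr (Or.inr (Or.inl rfl)))
      · exact Or.inr (Or.inr (Or.inr (Or.inr (Or.inl rfl))))
      · exact Or.inr (Or.inr (Or.inr (Or.inr (Or.inr rfl))))
      · exact Or.inl rfl
      · exact Or.inr (Or.inl rfl)
    · rw [rho_entries ρ hρ htr, ← hxdef, ← hydef, ← hzdef]
      exact decomp_eq x y z s hsdef hs0
    · simp only [Fin.sum_univ_succ, Fin.sum_univ_zero, Matrix.cons_val_zero,
        Matrix.cons_val_succ]
      have h1 := abs_split s (le_of_lt hs1) x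
      have h2 := abs_split s (le_of_lt hs1) y
      have h3 := abs_split s (le_of_lt hs1) z
      rw [hsdef]
      linarith
  have hrob : robustness stab1 ρ = s := by
    refine le_antisymm (csInf_le ⟨s, hlb⟩ hmem) (le_csInf ⟨s, hmem⟩ hlb)
  exact ⟨hrob, by rw [hrob]; ring⟩
end
end

section
/- Let |Ω⟩ = (‖c‖₁/k)·Σ_{α=1}^k |ω_α⟩ where |ω_α⟩ are i.i.d. random unit vectors with E[|ω_α⟩] = |ψ⟩/‖c‖₁ for a unit vector ψ. Then E[⟨Ω|Ω⟩] = 1 + (‖c‖₁² − 1)/k, and the variance satisfies Var[⟨Ω|Ω⟩] ≤ 4(C−1)/k + 2‖c‖₁⁴/k² + O(C/k³), where C = ‖c‖₁²·⟨ψ|σ|ψ⟩ with σ = E[|ω_α⟩⟨ω_α|]. -/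
open Matrix
open scoped ComplexOrder

noncomputable section

/-- The squared Euclidean norm `⟨w|w⟩` of a complex vector. -/
def nsq {d : ℕ} (w : Fin d → ℂ) : ℝ := (star w ⬝ᵥ w).re

/-- The random sparsified vector `|Ω⟩ = (‖c‖₁/k)·Σ_α |ω_α⟩`, for the outcome in
which the `α`-th sample takes the value `v (g α)`. -/
def sparseVec {d : ℕ} {J : Type*} (c1 : ℝ) (k : ℕ) (v : J → Fin d → ℂ)
    (g : Fin k → J) : Fin d → ℂ :=
  ((c1 : ℂ) / (k : ℂ)) • ∑ α, v (g α)

/-- The probability of the i.i.d. outcome `g` under the single-sample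
distribution `p`. -/
def prodProb {J : Type*} (p : J → ℝ) {k : ℕ} (g : Fin k → J) : ℝ := ∏ α, p (g α)

/-- The mean `E[⟨Ω|Ω⟩]` of the squared norm of the sparsified vector. -/
def meanNsq {d : ℕ} {J : Type*} [Fintype J] (p : J → ℝ) (c1 : ℝ) (k : ℕ)
    (v : J → Fin d → ℂ) : ℝ :=
  ∑ g : Fin k → J, prodProb p g * nsq (sparseVec c1 k v g)

/-- The variance `Var[⟨Ω|Ω⟩]` of the squared norm of the sparsified vector. -/
def varNsq {d : ℕ} {J : Type*} [Fintype J] (p : J → ℝ) (c1 : ℝ) (k : ℕ)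
    (v : J → Fin d → ℂ) : ℝ :=
  ∑ g : Fin k → J, prodProb p g * (nsq (sparseVec c1 k v g) - meanNsq p c1 k v) ^ 2

/-- The constant `C = ‖c‖₁²·⟨ψ|σ|ψ⟩` with `σ = E[|ω_α⟩⟨ω_α|]`. -/
def Cconst {d : ℕ} {J : Type*} [Fintype J] (p : J → ℝ) (v : J → Fin d → ℂ)
    (ψ : Fin d → ℂ) (c1 : ℝ) : ℝ :=
  c1 ^ 2 * (star ψ ⬝ᵥ ((∑ j, (p j : ℂ) • dyadM (v j) (v j)) *ᵥ ψ)).re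

/-!
Write `|Ω⟩ = (c/k) S` with `S = ∑ₐ xₐ`, where the `xₐ` are i.i.d. unit vectors of mean
`m = ψ/c`; complex vectors are treated as vectors of the real inner product space
`EuclideanSpace ℂ (Fin d)`, where `⟪a, b⟫_ℝ = Re ⟨a|b⟩`. Expanding `xₐ = m + (xₐ - m)` gives
`‖S‖² = k + k(k-1)‖m‖² + 2(k-1) ∑ₐ ⟪m, xₐ - m⟫ + ∑_{a ≠ b} ⟪xₐ - m, x_b - m⟫`.
Both random terms are built from centred factors, so the expectation of any product in which
some sample index occurs in only one centred factor vanishes (integrate that sample out first).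
This gives the mean, and `Var ‖S‖² = 4k(k-1)² A + 2k(k-1) D` with `A = E⟪m, x - m⟫²` and
`D = E⟪x - m, x' - m⟫²`. Finally `c⁴ A ≤ C - 1` because `(Re z)² ≤ |z|²`, and
`D ≤ (E‖x - m‖²)² ≤ 1` by Cauchy–Schwarz, so the bound holds with `Kbig = 0`.
-/

open scoped InnerProductSpace

section IidExpectation

variable {J ι : Type*} [Fintype J] [Fintype ι] [DecidableEq ι] (p : J → ℝ)

def iidExpect (F : (ι → J) → ℝ) : ℝ := ∑ g, (∏ a, p (g a)) * F g

def iidVar (F : (ι → J) → ℝ) : ℝ := iidExpect p (fun g => (F g - iidExpect p F) ^ 2)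

theorem iidExpect_add (F G : (ι → J) → ℝ) :
    iidExpect p (fun g => F g + G g) = iidExpect p F + iidExpect p G := by
  simp only [iidExpect, mul_add, Finset.sum_add_distrib]

theorem iidExpect_const_mul (c : ℝ) (F : (ι → J) → ℝ) :
    iidExpect p (fun g => c * F g) = c * iidExpect p F := by
  simp only [iidExpect, Finset.mul_sum]
  exact Finset.sum_congr rfl fun g _ => by ring

theorem iidExpect_sum {τ : Type*} (s : Finset τ) (F : τ → (ι → J) → ℝ) :
    iidExpect p (fun g => ∑ t ∈ s, F t g) = ∑ t ∈ s, iidExpect p (F t) := by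
  simp only [iidExpect, Finset.mul_sum]
  exact Finset.sum_comm

variable {p}

theorem iidExpect_const (hp1 : ∑ j, p j = 1) (c : ℝ) : iidExpect p (fun _ : ι → J => c) = c := by
  rw [iidExpect, ← Finset.sum_mul, ← Fintype.prod_sum, hp1, Finset.prod_const_one, one_mul]

theorem iidExpect_eq_sum_update (hp1 : ∑ j, p j = 1) (b : ι) (F : (ι → J) → ℝ) :
    iidExpect p F = ∑ i, p i * iidExpect p (fun g => F (Function.update g b i)) := by
  set e := (Equiv.funSplitAt b J).symm
  have weight : ∀ j h, ∏ a, p (e (j, h) a) = p j * ∏ a, p (h a) := fun j h => by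
    rw [Fintype.prod_eq_mul_prod_subtype_ne _ b]
    congr 1
    · simp [e]
    · exact Finset.prod_congr rfl fun a _ => by simp [e, a.2]
  have update_e : ∀ i j h, Function.update (e (j, h)) b i = e (i, h) := fun i j h => by
    ext a
    by_cases ha : a = b
    · subst ha; simp [e]
    · simp [e, ha]
  simp only [iidExpect, ← e.sum_comp, Fintype.sum_prod_type, weight, update_e, Finset.mul_sum]
  refine Finset.sum_congr rfl fun j _ => ?_
  rw [Finset.sum_comm]
  refine Finset.sum_congr rfl fun h _ => ?_
  simp_rw [← mul_assoc, mul_comm (p j), mul_assoc]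
  rw [← Finset.sum_mul, hp1, one_mul]
  ring

theorem iidExpect_eq_zero_of_sum_update (hp1 : ∑ j, p j = 1) (b : ι) {F : (ι → J) → ℝ}
    (hF : ∀ g, ∑ i, p i * F (Function.update g b i) = 0) : iidExpect p F = 0 := by
  simp_rw [iidExpect_eq_sum_update hp1 b F, ← iidExpect_const_mul, ← iidExpect_sum, hF,
    iidExpect_const hp1]

theorem iidExpect_apply (hp1 : ∑ j, p j = 1) (a : ι) (φ : J → ℝ) :
    iidExpect p (fun g => φ (g a)) = ∑ i, p i * φ i := by
  rw [iidExpect_eq_sum_update hp1 a]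
  simp only [Function.update_self, iidExpect_const hp1]

theorem iidExpect_apply₂ (hp1 : ∑ j, p j = 1) {a b : ι} (hab : a ≠ b) (φ : J → J → ℝ) :
    iidExpect p (fun g => φ (g a) (g b)) = ∑ i, ∑ j, p i * p j * φ i j := by
  rw [iidExpect_eq_sum_update hp1 a]
  simp only [Function.update_self, Function.update_of_ne hab.symm, iidExpect_apply hp1 b,
    Finset.mul_sum, mul_assoc]

end IidExpectation

section SumOfUnitVectors

variable {E ι : Type*} [NormedAddCommGroup E] [InnerProductSpace ℝ E] [Fintype ι] [DecidableEq ι]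

def linFluct (m : E) (y : ι → E) : ℝ := ∑ a, ⟪m, y a - m⟫_ℝ

def quadFluct (m : E) (y : ι → E) : ℝ :=
  ∑ a, ∑ b ∈ Finset.univ.erase a, ⟪y a - m, y b - m⟫_ℝ

theorem sum_sum_erase_const (r : ℝ) :
    ∑ a : ι, ∑ _b ∈ Finset.univ.erase a, r = Fintype.card ι * (Fintype.card ι - 1) * r := by
  simp only [Finset.sum_erase_eq_sub (Finset.mem_univ _), Finset.sum_const, Finset.card_univ,
    nsmul_eq_mul]
  ring

theorem norm_sum_sq_eq_sum_add_offDiag (w : ι → E) :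
    ‖∑ a, w a‖ ^ 2 = ∑ a, ‖w a‖ ^ 2 + ∑ a, ∑ b ∈ Finset.univ.erase a, ⟪w a, w b⟫_ℝ := by
  rw [← real_inner_self_eq_norm_sq, sum_inner, ← Finset.sum_add_distrib]
  refine Finset.sum_congr rfl fun a _ => ?_
  rw [inner_sum, ← real_inner_self_eq_norm_sq,
    Finset.add_sum_erase _ (fun b => ⟪w a, w b⟫_ℝ) (Finset.mem_univ a)]

theorem norm_sum_sq_eq_of_norm_eq_one {y : ι → E} (hy : ∀ a, ‖y a‖ = 1) (m : E) :
    ‖∑ a, y a‖ ^ 2 = Fintype.card ι + Fintype.card ι * (Fintype.card ι - 1) * ‖m‖ ^ 2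
      + 2 * (Fintype.card ι - 1) * linFluct m y + quadFluct m y := by
  have hsplit : ∑ a, y a = (Fintype.card ι : ℝ) • m + ∑ a, (y a - m) := by
    rw [Finset.sum_sub_distrib, Finset.sum_const, Finset.card_univ, Nat.cast_smul_eq_nsmul,
      add_sub_cancel]
  have hdiag : ∀ a, ‖y a - m‖ ^ 2 = 1 - ‖m‖ ^ 2 - 2 * ⟪m, y a - m⟫_ℝ := fun a => by
    rw [norm_sub_sq_real, hy, inner_sub_right, real_inner_self_eq_norm_sq, real_inner_comm]
    ring
  rw [hsplit, norm_add_sq_real, norm_sum_sq_eq_sum_add_offDiag, norm_smul, real_inner_smul_left,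
    inner_sum]
  simp only [hdiag, Finset.sum_sub_distrib, Finset.sum_const, Finset.card_univ, nsmul_eq_mul,
    ← Finset.mul_sum, Real.norm_natCast]
  unfold linFluct quadFluct
  ring

end SumOfUnitVectors

section IidUnitVectors

variable {E J ι : Type*} [NormedAddCommGroup E] [InnerProductSpace ℝ E] [Fintype J] [Fintype ι]
  [DecidableEq ι] {p : J → ℝ} {x : J → E} {m : E}

theorem sum_mul_inner_sub_left (hp1 : ∑ j, p j = 1) (hm : ∑ j, p j • x j = m) (z : E) :
    ∑ j, p j * ⟪x j - m, z⟫_ℝ = 0 := by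
  have hcentred : ∑ j, p j • (x j - m) = 0 := by
    simp only [smul_sub, Finset.sum_sub_distrib, hm, ← Finset.sum_smul, hp1, one_smul, sub_self]
  simp_rw [← real_inner_smul_left, ← sum_inner, hcentred, inner_zero_left]

theorem sum_mul_inner_sub_right (hp1 : ∑ j, p j = 1) (hm : ∑ j, p j • x j = m) (z : E) :
    ∑ j, p j * ⟪z, x j - m⟫_ℝ = 0 := by
  simpa only [real_inner_comm z] using sum_mul_inner_sub_left hp1 hm z

theorem sum_mul_norm_sub_sq (hp1 : ∑ j, p j = 1) (hm : ∑ j, p j • x j = m) :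
    ∑ j, p j * ‖x j - m‖ ^ 2 = ∑ j, p j * ‖x j‖ ^ 2 - ‖m‖ ^ 2 := by
  have hmean : ∑ j, p j * ⟪x j, m⟫_ℝ = ‖m‖ ^ 2 := by
    simp_rw [← real_inner_smul_left, ← sum_inner, hm, real_inner_self_eq_norm_sq]
  have hterm : ∀ j, p j * ‖x j - m‖ ^ 2
      = p j * ‖x j‖ ^ 2 - 2 * (p j * ⟪x j, m⟫_ℝ) + ‖m‖ ^ 2 * p j := fun j => by
    rw [norm_sub_sq_real]; ring
  rw [Finset.sum_congr rfl fun j _ => hterm j, Finset.sum_add_distrib, Finset.sum_sub_distrib,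
    ← Finset.mul_sum, ← Finset.mul_sum, hmean, hp1]
  ring

theorem sum_mul_inner_sub_sq (hp1 : ∑ j, p j = 1) (hm : ∑ j, p j • x j = m) :
    ∑ j, p j * ⟪m, x j - m⟫_ℝ ^ 2 = ∑ j, p j * ⟪m, x j⟫_ℝ ^ 2 - ‖m‖ ^ 4 := by
  have hmean : ∑ j, p j * ⟪m, x j⟫_ℝ = ‖m‖ ^ 2 := by
    simp_rw [← real_inner_smul_right, ← inner_sum, hm, real_inner_self_eq_norm_sq]
  have hterm : ∀ j, p j * ⟪m, x j - m⟫_ℝ ^ 2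
      = p j * ⟪m, x j⟫_ℝ ^ 2 - 2 * ‖m‖ ^ 2 * (p j * ⟪m, x j⟫_ℝ) + ‖m‖ ^ 4 * p j := fun j => by
    rw [inner_sub_right, real_inner_self_eq_norm_sq]; ring
  rw [Finset.sum_congr rfl fun j _ => hterm j, Finset.sum_add_distrib, Finset.sum_sub_distrib,
    ← Finset.mul_sum, ← Finset.mul_sum, hmean, hp1]
  ring

theorem sum_sum_mul_inner_sub_sq_le_one (hp : ∀ j, 0 ≤ p j) (hp1 : ∑ j, p j = 1)
    (hm : ∑ j, p j • x j = m) (hx : ∀ j, ‖x j‖ = 1) :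
    ∑ i, ∑ j, p i * p j * ⟪x i - m, x j - m⟫_ℝ ^ 2 ≤ 1 := by
  have hvar : ∑ j, p j * ‖x j - m‖ ^ 2 = 1 - ‖m‖ ^ 2 := by
    simp only [sum_mul_norm_sub_sq hp1 hm, hx, one_pow, mul_one, hp1]
  have hvar_nonneg : 0 ≤ ∑ j, p j * ‖x j - m‖ ^ 2 :=
    Finset.sum_nonneg fun j _ => mul_nonneg (hp j) (sq_nonneg _)
  calc ∑ i, ∑ j, p i * p j * ⟪x i - m, x j - m⟫_ℝ ^ 2
      ≤ ∑ i, ∑ j, (p i * ‖x i - m‖ ^ 2) * (p j * ‖x j - m‖ ^ 2) := by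
        refine Finset.sum_le_sum fun i _ => Finset.sum_le_sum fun j _ => ?_
        have hcs : ⟪x i - m, x j - m⟫_ℝ ^ 2 ≤ (‖x i - m‖ * ‖x j - m‖) ^ 2 := by
          rw [← sq_abs]
          exact pow_le_pow_left₀ (abs_nonneg _) (abs_real_inner_le_norm _ _) 2
        calc p i * p j * ⟪x i - m, x j - m⟫_ℝ ^ 2
            ≤ p i * p j * (‖x i - m‖ * ‖x j - m‖) ^ 2 :=
              mul_le_mul_of_nonneg_left hcs (mul_nonneg (hp i) (hp j))
          _ = _ := by ring
    _ = (∑ j, p j * ‖x j - m‖ ^ 2) ^ 2 := by rw [sq, Finset.sum_mul_sum]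
    _ ≤ 1 := pow_le_one₀ hvar_nonneg (by rw [hvar]; nlinarith [sq_nonneg ‖m‖])

theorem iidExpect_mul_inner_mean_eq_zero (hp1 : ∑ j, p j = 1) (hm : ∑ j, p j • x j = m) (a : ι)
    {H : (ι → J) → ℝ} (hH : ∀ g i, H (Function.update g a i) = H g) :
    iidExpect p (fun g => H g * ⟪m, x (g a) - m⟫_ℝ) = 0 :=
  iidExpect_eq_zero_of_sum_update hp1 a fun g => by
    simp_rw [Function.update_self, hH, mul_left_comm (p _), ← Finset.mul_sum,
      sum_mul_inner_sub_right hp1 hm, mul_zero]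

theorem iidExpect_mul_inner_eq_zero_left (hp1 : ∑ j, p j = 1) (hm : ∑ j, p j • x j = m)
    {a b : ι} (hab : a ≠ b) {H : (ι → J) → ℝ} (hH : ∀ g i, H (Function.update g a i) = H g) :
    iidExpect p (fun g => H g * ⟪x (g a) - m, x (g b) - m⟫_ℝ) = 0 :=
  iidExpect_eq_zero_of_sum_update hp1 a fun g => by
    simp_rw [Function.update_self, Function.update_of_ne hab.symm, hH, mul_left_comm (p _),
      ← Finset.mul_sum, sum_mul_inner_sub_left hp1 hm, mul_zero]

theorem iidExpect_mul_inner_eq_zero_right (hp1 : ∑ j, p j = 1) (hm : ∑ j, p j • x j = m)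
    {a b : ι} (hab : a ≠ b) {H : (ι → J) → ℝ} (hH : ∀ g i, H (Function.update g b i) = H g) :
    iidExpect p (fun g => H g * ⟪x (g a) - m, x (g b) - m⟫_ℝ) = 0 := by
  simpa only [real_inner_comm] using iidExpect_mul_inner_eq_zero_left hp1 hm hab.symm hH

theorem iidExpect_linFluct (hp1 : ∑ j, p j = 1) (hm : ∑ j, p j • x j = m) :
    iidExpect p (fun g : ι → J => linFluct m (fun a => x (g a))) = 0 := by
  simp only [linFluct, iidExpect_sum]
  refine Finset.sum_eq_zero fun a _ => ?_
  simpa using iidExpect_mul_inner_mean_eq_zero hp1 hm a (H := fun _ => 1) fun _ _ => rfl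

theorem iidExpect_quadFluct (hp1 : ∑ j, p j = 1) (hm : ∑ j, p j • x j = m) :
    iidExpect p (fun g : ι → J => quadFluct m (fun a => x (g a))) = 0 := by
  simp only [quadFluct, iidExpect_sum]
  refine Finset.sum_eq_zero fun a _ => Finset.sum_eq_zero fun b hb => ?_
  simpa using iidExpect_mul_inner_eq_zero_left hp1 hm (Finset.ne_of_mem_erase hb).symm
    (H := fun _ => 1) fun _ _ => rfl

theorem iidExpect_linFluct_sq (hp1 : ∑ j, p j = 1) (hm : ∑ j, p j • x j = m) :
    iidExpect p (fun g : ι → J => linFluct m (fun a => x (g a)) ^ 2)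
      = Fintype.card ι * ∑ j, p j * ⟪m, x j - m⟫_ℝ ^ 2 := by
  have hrow : ∀ a : ι,
      ∑ c, iidExpect p (fun g : ι → J => ⟪m, x (g a) - m⟫_ℝ * ⟪m, x (g c) - m⟫_ℝ)
        = ∑ j, p j * ⟪m, x j - m⟫_ℝ ^ 2 := fun a => by
    rw [Finset.sum_eq_single a]
    · simp only [← sq]
      exact iidExpect_apply hp1 a fun j => ⟪m, x j - m⟫_ℝ ^ 2
    · intro c _ hca
      exact iidExpect_mul_inner_mean_eq_zero hp1 hm c fun g i => by
        rw [Function.update_of_ne hca.symm]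
    · simp
  simp only [linFluct, sq, Finset.sum_mul_sum, iidExpect_sum, hrow, Finset.sum_const,
    Finset.card_univ, nsmul_eq_mul]

theorem iidExpect_linFluct_mul_quadFluct (hp1 : ∑ j, p j = 1) (hm : ∑ j, p j • x j = m) :
    iidExpect p (fun g : ι → J =>
      linFluct m (fun a => x (g a)) * quadFluct m (fun a => x (g a))) = 0 := by
  simp_rw [linFluct, quadFluct, Finset.sum_mul, Finset.mul_sum, iidExpect_sum]
  refine Finset.sum_eq_zero fun c _ => Finset.sum_eq_zero fun a _ =>
    Finset.sum_eq_zero fun b hb => ?_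
  have hba := Finset.ne_of_mem_erase hb
  by_cases hca : c = a
  · subst hca
    exact iidExpect_mul_inner_eq_zero_right hp1 hm (Ne.symm hba) fun g i => by
      rw [Function.update_of_ne hba.symm]
  · exact iidExpect_mul_inner_eq_zero_left hp1 hm (Ne.symm hba) fun g i => by
      rw [Function.update_of_ne hca]

/-- Only the pairs `(c, e) = (a, b)` and `(c, e) = (b, a)` are correlated with `(a, b)`. -/
theorem sum_iidExpect_inner_mul_inner (hp1 : ∑ j, p j = 1) (hm : ∑ j, p j • x j = m) {a b : ι}
    (hab : a ≠ b) :
    ∑ c, ∑ e ∈ Finset.univ.erase c, iidExpect p (fun g : ι → J =>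
      ⟪x (g c) - m, x (g e) - m⟫_ℝ * ⟪x (g a) - m, x (g b) - m⟫_ℝ)
      = 2 * ∑ i, ∑ j, p i * p j * ⟪x i - m, x j - m⟫_ℝ ^ 2 := by
  have free_a : ∀ c e, c ≠ a → e ≠ a → iidExpect p (fun g : ι → J =>
      ⟪x (g c) - m, x (g e) - m⟫_ℝ * ⟪x (g a) - m, x (g b) - m⟫_ℝ) = 0 := fun c e hc he =>
    iidExpect_mul_inner_eq_zero_left hp1 hm hab fun g i => by
      rw [Function.update_of_ne hc, Function.update_of_ne he]
  have free_b : ∀ c e, c ≠ b → e ≠ b → iidExpect p (fun g : ι → J =>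
      ⟪x (g c) - m, x (g e) - m⟫_ℝ * ⟪x (g a) - m, x (g b) - m⟫_ℝ) = 0 := fun c e hc he =>
    iidExpect_mul_inner_eq_zero_right hp1 hm hab fun g i => by
      rw [Function.update_of_ne hc, Function.update_of_ne he]
  have same : iidExpect p (fun g : ι → J =>
      ⟪x (g a) - m, x (g b) - m⟫_ℝ * ⟪x (g a) - m, x (g b) - m⟫_ℝ)
      = ∑ i, ∑ j, p i * p j * ⟪x i - m, x j - m⟫_ℝ ^ 2 := by
    simp only [← sq]
    exact iidExpect_apply₂ hp1 hab fun i j => ⟪x i - m, x j - m⟫_ℝ ^ 2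
  have swapped : iidExpect p (fun g : ι → J =>
      ⟪x (g b) - m, x (g a) - m⟫_ℝ * ⟪x (g a) - m, x (g b) - m⟫_ℝ)
      = ∑ i, ∑ j, p i * p j * ⟪x i - m, x j - m⟫_ℝ ^ 2 := by
    rw [← same]
    congr 1 with g
    rw [real_inner_comm (x (g a) - m)]
  rw [Finset.sum_eq_add a b hab,
    Finset.sum_eq_single_of_mem b (Finset.mem_erase.2 ⟨hab.symm, Finset.mem_univ b⟩),
    Finset.sum_eq_single_of_mem a (Finset.mem_erase.2 ⟨hab, Finset.mem_univ a⟩), same, swapped,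
    two_mul]
  · exact fun e _ hea => free_a b e hab.symm hea
  · exact fun e _ heb => free_b a e hab heb
  · rintro c - ⟨hca, hcb⟩
    refine Finset.sum_eq_zero fun e _ => ?_
    by_cases hea : e = a
    · exact hea ▸ free_b c a hcb hab
    · exact free_a c e hca hea
  · exact fun h => absurd (Finset.mem_univ a) h
  · exact fun h => absurd (Finset.mem_univ b) h

theorem iidExpect_quadFluct_sq (hp1 : ∑ j, p j = 1) (hm : ∑ j, p j • x j = m) :
    iidExpect p (fun g : ι → J => quadFluct m (fun a => x (g a)) ^ 2)
      = 2 * Fintype.card ι * (Fintype.card ι - 1)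
        * ∑ i, ∑ j, p i * p j * ⟪x i - m, x j - m⟫_ℝ ^ 2 := by
  have hexpand : ∀ g : ι → J, quadFluct m (fun a => x (g a)) ^ 2
      = ∑ a, ∑ b ∈ Finset.univ.erase a, ∑ c, ∑ e ∈ Finset.univ.erase c,
        ⟪x (g c) - m, x (g e) - m⟫_ℝ * ⟪x (g a) - m, x (g b) - m⟫_ℝ := fun g => by
    simp_rw [quadFluct, sq, Finset.mul_sum, Finset.sum_mul]
  simp only [hexpand, iidExpect_sum]
  rw [Finset.sum_congr rfl fun a _ => Finset.sum_congr rfl fun b hb =>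
    sum_iidExpect_inner_mul_inner hp1 hm (Finset.ne_of_mem_erase hb).symm, sum_sum_erase_const]
  ring

theorem iidExpect_norm_sum_sq (hp1 : ∑ j, p j = 1) (hm : ∑ j, p j • x j = m)
    (hx : ∀ j, ‖x j‖ = 1) :
    iidExpect p (fun g : ι → J => ‖∑ a, x (g a)‖ ^ 2)
      = Fintype.card ι + Fintype.card ι * (Fintype.card ι - 1) * ‖m‖ ^ 2 := by
  have hdecomp := fun g : ι → J => norm_sum_sq_eq_of_norm_eq_one (fun a => hx (g a)) m
  simp only [hdecomp, iidExpect_add, iidExpect_const_mul, iidExpect_const hp1,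
    iidExpect_linFluct hp1 hm, iidExpect_quadFluct hp1 hm]
  ring

theorem iidVar_norm_sum_sq (hp1 : ∑ j, p j = 1) (hm : ∑ j, p j • x j = m)
    (hx : ∀ j, ‖x j‖ = 1) :
    iidVar p (fun g : ι → J => ‖∑ a, x (g a)‖ ^ 2)
      = 4 * Fintype.card ι * (Fintype.card ι - 1) ^ 2 * ∑ j, p j * ⟪m, x j - m⟫_ℝ ^ 2
        + 2 * Fintype.card ι * (Fintype.card ι - 1)
          * ∑ i, ∑ j, p i * p j * ⟪x i - m, x j - m⟫_ℝ ^ 2 := by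
  have hdev : ∀ g : ι → J, (‖∑ a, x (g a)‖ ^ 2
      - (Fintype.card ι + Fintype.card ι * (Fintype.card ι - 1) * ‖m‖ ^ 2)) ^ 2
      = (2 * (Fintype.card ι - 1)) ^ 2 * linFluct m (fun a => x (g a)) ^ 2
        + 2 * (2 * (Fintype.card ι - 1))
          * (linFluct m (fun a => x (g a)) * quadFluct m (fun a => x (g a)))
        + quadFluct m (fun a => x (g a)) ^ 2 := fun g => by
    rw [norm_sum_sq_eq_of_norm_eq_one (fun a => hx (g a)) m]
    ring
  simp only [iidVar, iidExpect_norm_sum_sq hp1 hm hx, hdev, iidExpect_add, iidExpect_const_mul,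
    iidExpect_linFluct_sq hp1 hm, iidExpect_linFluct_mul_quadFluct hp1 hm,
    iidExpect_quadFluct_sq hp1 hm]
  ring

theorem iidVar_norm_sum_sq_le (hp : ∀ j, 0 ≤ p j) (hp1 : ∑ j, p j = 1)
    (hm : ∑ j, p j • x j = m) (hx : ∀ j, ‖x j‖ = 1) :
    iidVar p (fun g : ι → J => ‖∑ a, x (g a)‖ ^ 2)
      ≤ 4 * Fintype.card ι ^ 3 * ∑ j, p j * ⟪m, x j - m⟫_ℝ ^ 2 + 2 * Fintype.card ι ^ 2 := by
  have hA : 0 ≤ ∑ j, p j * ⟪m, x j - m⟫_ℝ ^ 2 :=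
    Finset.sum_nonneg fun j _ => mul_nonneg (hp j) (sq_nonneg _)
  have hD := sum_sum_mul_inner_sub_sq_le_one hp hp1 hm hx
  rw [iidVar_norm_sum_sq hp1 hm hx]
  rcases Nat.eq_zero_or_pos (Fintype.card ι) with hn | hn
  · simp [hn]
  · have hn : (1 : ℝ) ≤ Fintype.card ι := by exact_mod_cast hn
    generalize (Fintype.card ι : ℝ) = n at hn ⊢
    have hlin : n * (n - 1) ^ 2 ≤ n ^ 3 := by nlinarith
    have hquad : n * (n - 1) * ∑ i, ∑ j, p i * p j * ⟪x i - m, x j - m⟫_ℝ ^ 2 ≤ n ^ 2 := by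
      nlinarith [mul_le_mul_of_nonneg_left hD (by nlinarith : 0 ≤ n * (n - 1))]
    nlinarith [mul_le_mul_of_nonneg_right hlin hA]

end IidUnitVectors

section ComplexVectors

variable {d : ℕ}

theorem real_inner_toLp (a b : Fin d → ℂ) :
    ⟪WithLp.toLp 2 a, WithLp.toLp 2 b⟫_ℝ = (star a ⬝ᵥ b).re := by
  simp only [PiLp.inner_apply, Complex.inner, dotProduct, Pi.star_apply, RCLike.star_def,
    Complex.re_sum, Complex.mul_re, Complex.conj_re, Complex.conj_im]
  exact Finset.sum_congr rfl fun _ _ => by ring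

theorem norm_toLp_sq (a : Fin d → ℂ) : ‖WithLp.toLp 2 a‖ ^ 2 = nsq a := by
  rw [← real_inner_self_eq_norm_sq, real_inner_toLp, nsq]

theorem real_inner_toLp_ofReal_smul (r : ℝ) (a b : Fin d → ℂ) :
    ⟪WithLp.toLp 2 ((r : ℂ) • a), WithLp.toLp 2 b⟫_ℝ = r * (star a ⬝ᵥ b).re := by
  rw [real_inner_toLp, star_smul, smul_dotProduct, Complex.star_def, Complex.conj_ofReal,
    smul_eq_mul, Complex.re_ofReal_mul]

theorem norm_toLp_ofReal_smul_sq (r : ℝ) (a : Fin d → ℂ) :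
    ‖WithLp.toLp 2 ((r : ℂ) • a)‖ ^ 2 = r ^ 2 * nsq a := by
  rw [← real_inner_self_eq_norm_sq, real_inner_toLp_ofReal_smul, dotProduct_smul, smul_eq_mul,
    Complex.re_ofReal_mul, nsq]
  ring

theorem nsq_sparseVec {J : Type*} (c1 : ℝ) (k : ℕ) (v : J → Fin d → ℂ) (g : Fin k → J) :
    nsq (sparseVec c1 k v g) = (c1 / k) ^ 2 * ‖∑ a, WithLp.toLp 2 (v (g a))‖ ^ 2 := by
  rw [← norm_toLp_sq, sparseVec, WithLp.toLp_smul, WithLp.toLp_sum, norm_smul, mul_pow,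
    ← Complex.ofReal_natCast, ← Complex.ofReal_div, Complex.norm_real, Real.norm_eq_abs, sq_abs]

variable {J : Type*} [Fintype J]

theorem meanNsq_eq_iidExpect (p : J → ℝ) (c1 : ℝ) (k : ℕ) (v : J → Fin d → ℂ) :
    meanNsq p c1 k v
      = (c1 / k) ^ 2 * iidExpect p (fun g : Fin k → J => ‖∑ a, WithLp.toLp 2 (v (g a))‖ ^ 2) := by
  rw [← iidExpect_const_mul]
  simp only [meanNsq, prodProb, nsq_sparseVec]
  rfl

theorem varNsq_eq_iidVar (p : J → ℝ) (c1 : ℝ) (k : ℕ) (v : J → Fin d → ℂ) :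
    varNsq p c1 k v
      = (c1 / k) ^ 4 * iidVar p (fun g : Fin k → J => ‖∑ a, WithLp.toLp 2 (v (g a))‖ ^ 2) := by
  rw [varNsq, meanNsq_eq_iidExpect, iidVar, ← iidExpect_const_mul p ((c1 / k) ^ 4)]
  apply Finset.sum_congr rfl
  intro g _
  rw [prodProb, nsq_sparseVec]
  ring

theorem Cconst_eq (p : J → ℝ) (v : J → Fin d → ℂ) (ψ : Fin d → ℂ) (c1 : ℝ) :
    Cconst p v ψ c1 = c1 ^ 2 * ∑ j, p j * Complex.normSq (star ψ ⬝ᵥ v j) := by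
  simp only [Cconst, dyadM, sum_mulVec, smul_mulVec, vecMulVec_mulVec, dotProduct_sum,
    dotProduct_smul, Complex.re_sum, op_smul_eq_mul, smul_eq_mul]
  refine congrArg _ (Finset.sum_congr rfl fun j _ => ?_)
  rw [Matrix.star_dotProduct (v j), Complex.star_def, Complex.mul_conj, Complex.re_ofReal_mul,
    Complex.ofReal_re]

theorem pow_four_mul_sum_inner_sub_sq_le_Cconst {p : J → ℝ} {v : J → Fin d → ℂ}
    {ψ : Fin d → ℂ} {c1 : ℝ} (hp : ∀ j, 0 ≤ p j) (hp1 : ∑ j, p j = 1) (hψ : nsq ψ = 1)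
    (hc1 : c1 ≠ 0) (hm : ∑ j, p j • WithLp.toLp 2 (v j) = WithLp.toLp 2 ((c1 : ℂ)⁻¹ • ψ)) :
    c1 ^ 4 * ∑ j, p j * ⟪WithLp.toLp 2 ((c1 : ℂ)⁻¹ • ψ),
      WithLp.toLp 2 (v j) - WithLp.toLp 2 ((c1 : ℂ)⁻¹ • ψ)⟫_ℝ ^ 2 ≤ Cconst p v ψ c1 - 1 := by
  have hnorm : ‖WithLp.toLp 2 ((c1 : ℂ)⁻¹ • ψ)‖ ^ 4 = (c1⁻¹ ^ 2) ^ 2 := by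
    rw [show ∀ r : ℝ, r ^ 4 = (r ^ 2) ^ 2 from fun r => by ring, ← Complex.ofReal_inv,
      norm_toLp_ofReal_smul_sq, hψ, mul_one]
  have hre : ∑ j, p j * (star ψ ⬝ᵥ v j).re ^ 2 ≤ ∑ j, p j * Complex.normSq (star ψ ⬝ᵥ v j) :=
    Finset.sum_le_sum fun j _ =>
      mul_le_mul_of_nonneg_left ((sq _).trans_le (Complex.re_sq_le_normSq _)) (hp j)
  have hc : c1 ^ 4 * (c1⁻¹ ^ 2 * ∑ j, p j * (star ψ ⬝ᵥ v j).re ^ 2 - (c1⁻¹ ^ 2) ^ 2)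
      = c1 ^ 2 * ∑ j, p j * (star ψ ⬝ᵥ v j).re ^ 2 - 1 := by
    field_simp
  rw [sum_mul_inner_sub_sq hp1 hm, hnorm, ← Complex.ofReal_inv]
  simp only [real_inner_toLp_ofReal_smul, mul_pow, mul_left_comm (p _) (c1⁻¹ ^ 2),
    ← Finset.mul_sum]
  rw [hc, Cconst_eq]
  gcongr

end ComplexVectors

/-- **Sparsification mean and variance bound.**  Let `|Ω⟩ = (‖c‖₁/k)·Σ_α|ω_α⟩`
with `|ω_α⟩` i.i.d. random unit vectors (finitely many values, single-sample
distribution `p`, values `v`) satisfying `E[|ω_α⟩] = |ψ⟩/‖c‖₁` for a unit vector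
`ψ`.  Then `E[⟨Ω|Ω⟩] = 1 + (‖c‖₁² − 1)/k` and
`Var[⟨Ω|Ω⟩] ≤ 4(C−1)/k + 2‖c‖₁⁴/k² + O(C/k³)` with
`C = ‖c‖₁²·⟨ψ|σ|ψ⟩`, `σ = E[|ω_α⟩⟨ω_α|]`. -/
theorem sparsification_mean_and_variance {d : ℕ} {J : Type*} [Fintype J]
    (p : J → ℝ) (v : J → Fin d → ℂ) (ψ : Fin d → ℂ) (c1 : ℝ)
    (hp : ∀ j, 0 ≤ p j) (hp1 : ∑ j, p j = 1)
    (hv : ∀ j, nsq (v j) = 1) (hψ : nsq ψ = 1) (hc1 : 1 ≤ c1)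
    (hmean : ∑ j, (p j : ℂ) • v j = ((c1 : ℂ))⁻¹ • ψ) :
    (∀ k : ℕ, 1 ≤ k → meanNsq p c1 k v = 1 + (c1 ^ 2 - 1) / (k : ℝ)) ∧
    ∃ Kbig : ℝ, ∀ k : ℕ, 1 ≤ k →
      varNsq p c1 k v ≤ 4 * (Cconst p v ψ c1 - 1) / (k : ℝ) +
        2 * c1 ^ 4 / (k : ℝ) ^ 2 + Kbig * Cconst p v ψ c1 / (k : ℝ) ^ 3 := by
  set x : J → EuclideanSpace ℂ (Fin d) := fun j => WithLp.toLp 2 (v j)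
  set m : EuclideanSpace ℂ (Fin d) := WithLp.toLp 2 ((c1 : ℂ)⁻¹ • ψ) with hm_def
  have hx : ∀ j, ‖x j‖ = 1 := fun j => by
    rw [← pow_eq_one_iff_of_nonneg (norm_nonneg _) two_ne_zero, norm_toLp_sq, hv]
  have hm : ∑ j, p j • x j = m := by
    rw [hm_def, ← hmean, WithLp.toLp_sum]
    simp only [x, WithLp.toLp_smul, Complex.coe_smul]
  have hm_sq : ‖m‖ ^ 2 = c1⁻¹ ^ 2 := by
    rw [hm_def, ← Complex.ofReal_inv, norm_toLp_ofReal_smul_sq, hψ, mul_one]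
  have hA : c1 ^ 4 * ∑ j, p j * ⟪m, x j - m⟫_ℝ ^ 2 ≤ Cconst p v ψ c1 - 1 :=
    pow_four_mul_sum_inner_sub_sq_le_Cconst hp hp1 hψ (zero_lt_one.trans_le hc1).ne' hm
  refine ⟨fun k hk => ?_, 0, fun k hk => ?_⟩
  · rw [meanNsq_eq_iidExpect, iidExpect_norm_sum_sq hp1 hm hx, hm_sq, Fintype.card_fin]
    field_simp
    ring
  · have hk0 : (0 : ℝ) < k := by exact_mod_cast hk
    calc varNsq p c1 k v
        ≤ (c1 / k) ^ 4 * (4 * k ^ 3 * ∑ j, p j * ⟪m, x j - m⟫_ℝ ^ 2 + 2 * k ^ 2) := by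
          rw [varNsq_eq_iidVar]
          gcongr
          simpa only [Fintype.card_fin] using iidVar_norm_sum_sq_le (ι := Fin k) hp hp1 hm hx
      _ = 4 * (c1 ^ 4 * ∑ j, p j * ⟪m, x j - m⟫_ℝ ^ 2) / k + 2 * c1 ^ 4 / k ^ 2 := by
          field_simp
      _ ≤ _ := by
          rw [zero_mul, zero_div, add_zero]
          gcongr
end
end
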